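/- arXiv:2306.15535 — 5 statements merged into one kernel-verified Lean document; each statement's English description precedes it below -/
import Mathlib

section
/- If ψ : ℕ → ℝ≥0 satisfies ∑_{q=1}^∞ (φ(q)ψ(q)/q) < ∞, where φ is the Euler totient function, then the set A'(ψ) = {x ∈ [0,1] : |x - p/q| < ψ(q)/q for infinitely many coprime pairs (p,q)} has Lebesgue measure zero. -/
/-!
Borel–Cantelli. Let `A q` be the set of `x ∈ [0, 1]` within `ψ q / q` of some reduced fraction
`p / q`. A point approximable by infinitely many reduced fractions lies in infinitely many `A q`,
since for fixed `q` only finitely many `p` are close to `x`. When `ψ q ≤ q` only the `p` in a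
window of length `3q` matter, and at most `4 φ(q)` of them are coprime to `q`, so
`vol (A q) ≤ 8 φ(q) ψ(q) / q`; this bound is trivial when `ψ q > q`.
Hence `∑ vol (A q) < ∞`.
-/

open Set MeasureTheory Metric Filter Topology ENNReal NNReal

noncomputable section

/-- The limsup of a sequence of sets: points belonging to infinitely many of them. -/
def limsupSet {X : Type*} (A : ℕ → Set X) : Set X :=
  ⋂ N, ⋃ n, ⋃ (_ : N ≤ n), A n

/-- `s`-dimensional Hausdorff content, via covers by countably many closed balls. -/
def hContent {X : Type*} [PseudoMetricSpace X] (s : ℝ) (E : Set X) : ℝ≥0∞ :=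
  ⨅ (c : ℕ → X) (r : ℕ → ℝ) (_ : ∀ n, 0 ≤ r n)
    (_ : E ⊆ ⋃ n, Metric.closedBall (c n) (r n)),
    ∑' n, ENNReal.ofReal (r n ^ s)

/-- A dimension function: continuous on `(0,∞)`, positive, tending to `0` at `0`. -/
def IsDimFun (f : ℝ → ℝ) : Prop :=
  ContinuousOn f (Set.Ioi 0) ∧ (∀ r > 0, 0 < f r) ∧
    Filter.Tendsto f (nhdsWithin 0 (Set.Ioi 0)) (nhds 0)

/-- The `ρ`-approximate Hausdorff `f`-measure. -/
def preHausdorffF {X : Type*} [PseudoMetricSpace X] (f : ℝ → ℝ) (ρ : ℝ) (F : Set X) : ℝ≥0∞ :=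
  ⨅ (c : ℕ → X) (r : ℕ → ℝ) (_ : ∀ n, 0 < r n ∧ r n < ρ)
    (_ : F ⊆ ⋃ n, Metric.ball (c n) (r n)),
    ∑' n, ENNReal.ofReal (f (r n))

/-- The Hausdorff `f`-measure, obtained as `ρ → 0` (equivalently, the supremum over `ρ > 0`). -/
def hausdorffF {X : Type*} [PseudoMetricSpace X] (f : ℝ → ℝ) (F : Set X) : ℝ≥0∞ :=
  ⨆ (ρ : ℝ) (_ : 0 < ρ), preHausdorffF f ρ F

end

open scoped Finset Nat

lemma Int.card_filter_Ico_gcd_eq_one_le {q : ℕ} (hq : q ≠ 0) (k : ℤ) (n : ℕ) :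
    #{p ∈ Finset.Ico k (k + n) | Int.gcd p q = 1} ≤ φ q * (n / q + 1) := by
  -- shift by a multiple of `q` into `ℕ`, which preserves the gcd with `q`
  set t : ℤ := q * k.natAbs
  have hkt : 0 ≤ k + t := by
    have : (k.natAbs : ℤ) ≤ t := le_mul_of_one_le_left (by positivity) (by omega)
    omega
  refine (Finset.card_le_card_of_injOn (fun p => (p + t).toNat) ?_ ?_).trans
    (Nat.Ico_filter_coprime_le (k + t).toNat n hq)
  · intro p hp
    simp only [Finset.coe_filter, Finset.mem_Ico, Set.mem_ofPred_eq] at hp ⊢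
    refine ⟨by omega, ?_⟩
    rw [Nat.Coprime, Nat.gcd_comm, ← Int.gcd_natCast_natCast, Int.toNat_of_nonneg (by omega),
      Int.gcd_add_mul_left_left]
    exact hp.2
  · intro p₁ hp₁ p₂ hp₂ h
    simp only [Finset.coe_filter, Finset.mem_Ico, Set.mem_ofPred_eq] at hp₁ hp₂ h
    omega

lemma finite_setOf_abs_sub_intCast_div_lt (x r : ℝ) {q : ℝ} (hq : q ≠ 0) :
    {p : ℤ | |x - p / q| < r}.Finite := by
  have hdiscrete : Tendsto (fun p : ℤ => (p : ℝ) * q⁻¹) cofinite (cocompact ℝ) :=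
    (Homeomorph.mulRight₀ q⁻¹ (inv_ne_zero hq)).isClosedEmbedding.tendsto_cocompact.comp
      Int.tendsto_coe_cofinite
  refine (mem_cofinite.1 (hdiscrete (isCompact_closedBall x r).compl_mem_cocompact)).subset ?_
  intro p hp
  simpa [Real.dist_eq, abs_sub_comm, div_eq_mul_inv] using hp.le

lemma volume_setOf_exists_gcd_eq_one_abs_sub_lt_le {q : ℕ} (hq : q ≠ 0) (r : ℝ) :
    volume {x ∈ Icc (0 : ℝ) 1 | ∃ p : ℤ, Int.gcd p q = 1 ∧ |x - p / q| < r} ≤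
      ENNReal.ofReal (8 * φ q * r) := by
  have hq₀ : (0 : ℝ) < q := by positivity
  have hφ : (1 : ℝ) ≤ φ q := by exact_mod_cast Nat.totient_pos.2 (Nat.pos_of_ne_zero hq)
  rcases lt_or_ge 1 r with hr | hr
  · calc volume _ ≤ volume (Icc (0 : ℝ) 1) := measure_mono (sep_subset _ _)
      _ = ENNReal.ofReal 1 := by simp
      _ ≤ _ := ENNReal.ofReal_le_ofReal (by nlinarith)
  set T := {p ∈ Finset.Ico (-q : ℤ) (-q + (3 * q : ℕ)) | Int.gcd p q = 1}
  have hcover : {x ∈ Icc (0 : ℝ) 1 | ∃ p : ℤ, Int.gcd p q = 1 ∧ |x - p / q| < r} ⊆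
      ⋃ p ∈ T, ball ((p : ℝ) / q) r := by
    rintro x ⟨⟨hx₀, hx₁⟩, p, hp, hpx⟩
    obtain ⟨hlo, hhi⟩ := abs_lt.1 hpx
    have hlo' : -(q : ℝ) < p := by
      have := (lt_div_iff₀ hq₀).1 (show (-1 : ℝ) < p / q by linarith); linarith
    have hhi' : (p : ℝ) < 2 * q := (div_lt_iff₀ hq₀).1 (by linarith)
    have hpT : p ∈ T := by
      simp only [T, Finset.mem_filter, Finset.mem_Ico]
      refine ⟨⟨?_, ?_⟩, hp⟩
      · exact_mod_cast hlo'.le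
      · push_cast; exact_mod_cast (show (p : ℝ) < -q + 3 * q by linarith)
    exact mem_biUnion hpT (by rw [mem_ball, Real.dist_eq]; exact hpx)
  calc volume _ ≤ volume (⋃ p ∈ T, ball ((p : ℝ) / q) r) := measure_mono hcover
    _ ≤ ∑ p ∈ T, volume (ball ((p : ℝ) / q) r) := measure_biUnion_finset_le T _
    _ = #T * ENNReal.ofReal (2 * r) := by simp [Real.volume_ball]
    _ ≤ (4 * φ q : ℕ) * ENNReal.ofReal (2 * r) := by
      gcongr
      have hcard : #T ≤ φ q * (3 * q / q + 1) :=
        Int.card_filter_Ico_gcd_eq_one_le hq (-q) (3 * q)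
      rw [Nat.mul_div_cancel _ (Nat.pos_of_ne_zero hq)] at hcard
      omega
    _ = ENNReal.ofReal (8 * φ q * r) := by
      rw [← ENNReal.ofReal_natCast, ← ENNReal.ofReal_mul (by positivity)]
      push_cast
      ring_nf

lemma frequently_atTop_exists_of_infinite {α : Type*} {S : Set (α × ℕ)} (hS : S.Infinite)
    (hfiber : ∀ q, {p | (p, q) ∈ S}.Finite) : ∃ᶠ q in atTop, ∃ p, (p, q) ∈ S := by
  rw [frequently_atTop]
  intro a
  by_contra! h
  refine hS (((finite_Iio a).biUnion fun q _ => (hfiber q).prod (finite_singleton q)).subset ?_)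
  rintro ⟨p, q⟩ hpq
  exact mem_biUnion (not_le.1 fun hq => h q hq p hpq) ⟨hpq, rfl⟩

theorem stmt1_general (ψ : ℕ → ℝ)
    (hsum : Summable fun q : ℕ => (Nat.totient q : ℝ) * ψ q / q) :
    MeasureTheory.volume
      {x ∈ Set.Icc (0 : ℝ) 1 |
        {pq : ℤ × ℕ | 1 ≤ pq.2 ∧ Int.gcd pq.1 pq.2 = 1 ∧
          |x - (pq.1 : ℝ) / (pq.2 : ℝ)| < ψ pq.2 / pq.2}.Infinite} = 0 := by
  set A : ℕ → Set ℝ :=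
    fun q => {x ∈ Icc (0 : ℝ) 1 | ∃ p : ℤ, Int.gcd p q = 1 ∧ |x - p / q| < ψ q / q}
  have hA : ∀ q, volume (A q) ≤ ENNReal.ofReal (8 * (φ q * ψ q / q)) := by
    intro q
    rcases eq_or_ne q 0 with rfl | hq
    · simp [A, (abs_nonneg _).not_gt]
    · simpa only [mul_div_assoc, mul_assoc] using
        volume_setOf_exists_gcd_eq_one_abs_sub_lt_le hq (ψ q / q)
  have hsumA : ∑' q, volume (A q) ≠ ∞ :=
    ne_top_of_le_ne_top (hsum.mul_left 8).tsum_ofReal_ne_top (ENNReal.tsum_le_tsum hA)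
  refine measure_mono_null ?_ (measure_limsup_atTop_eq_zero hsumA)
  rintro x ⟨hx, hinf⟩
  rw [mem_limsup_iff_frequently_mem]
  refine (frequently_atTop_exists_of_infinite hinf fun q => ?_).mono ?_
  · rcases eq_or_ne q 0 with rfl | hq
    · simp
    · exact (finite_setOf_abs_sub_intCast_div_lt x (ψ q / q) (Nat.cast_ne_zero.2 hq)).subset
        fun _ hp => hp.2.2
  · rintro q ⟨p, -, hp, hpx⟩
    exact ⟨hx, p, hp, hpx⟩

/-- Convergence part of the Duffin–Schaeffer conjecture. -/
theorem stmt1 (ψ : ℕ → ℝ) (hψ : ∀ q, 0 ≤ ψ q)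
    (hsum : Summable fun q : ℕ => (Nat.totient q : ℝ) * ψ q / q) :
    MeasureTheory.volume
      {x ∈ Set.Icc (0 : ℝ) 1 |
        {pq : ℤ × ℕ | 1 ≤ pq.2 ∧ Int.gcd pq.1 pq.2 = 1 ∧
          |x - (pq.1 : ℝ) / (pq.2 : ℝ)| < ψ pq.2 / pq.2}.Infinite} = 0 :=
  stmt1_general ψ hsum
end

section
/- For k ≥ 1 and ψ : ℕ → ℝ≥0 with ∑_{q=1}^∞ ψ(q)^k < ∞, the set A_k(ψ) = {x ∈ [0,1]^k : ‖qx - p‖_∞ < ψ(q) for infinitely many (p,q) ∈ ℤ^k × ℕ} has k-dimensional Lebesgue measure zero. -/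
open Set MeasureTheory Metric Filter Topology ENNReal NNReal

-- Fiber finiteness
lemma fiber_finite (k q : ℕ) (x : Fin k → ℝ) (ψq : ℝ) :
    {p : Fin k → ℤ | ‖(q : ℝ) • x - fun i => ((p i : ℝ))‖ < ψq}.Finite := by
  apply Set.Finite.subset
    (Set.Finite.pi (fun i => Set.finite_Icc (⌈(q : ℝ) * x i - ψq⌉) (⌊(q : ℝ) * x i + ψq⌋)))
  intro p hp
  simp only [Set.mem_setOf_eq] at hp
  intro i _
  have h1 : |((q : ℝ) • x - fun i => ((p i : ℝ))) i| ≤ ‖(q : ℝ) • x - fun i => ((p i : ℝ))‖ := by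
    simpa using norm_le_pi_norm ((q : ℝ) • x - fun i => ((p i : ℝ))) i
  have h2 : |(q : ℝ) * x i - p i| < ψq := by
    simpa [Pi.sub_apply, Pi.smul_apply, smul_eq_mul] using lt_of_le_of_lt h1 hp
  rw [abs_lt] at h2
  constructor
  · exact Int.ceil_le.mpr (by linarith [h2.2])
  · exact Int.le_floor.mpr (by linarith [h2.1])

lemma Evol (k q : ℕ) (hq : 1 ≤ q) (ψq : ℝ) (h0 : 0 < ψq) (h1 : ψq ≤ 1) :
    MeasureTheory.volume
      {x : Fin k → ℝ | x ∈ (Set.univ.pi fun _ : Fin k => Set.Icc (0 : ℝ) 1) ∧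
        ∃ p : Fin k → ℤ, ‖(q : ℝ) • x - fun i => ((p i : ℝ))‖ < ψq}
      ≤ ENNReal.ofReal ((8 * ψq) ^ k) := by
  have hq0 : (0 : ℝ) < q := by exact_mod_cast hq
  set F : Finset (Fin k → ℤ) := Fintype.piFinset fun _ => Finset.Icc (0 : ℤ) q with hF
  set B : (Fin k → ℤ) → Set (Fin k → ℝ) := fun p =>
    Set.univ.pi fun i => Set.Ioo (((p i : ℝ) - ψq) / q) (((p i : ℝ) + ψq) / q) with hB
  have hsub : {x : Fin k → ℝ | x ∈ (Set.univ.pi fun _ : Fin k => Set.Icc (0 : ℝ) 1) ∧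
        ∃ p : Fin k → ℤ, ‖(q : ℝ) • x - fun i => ((p i : ℝ))‖ < ψq} ⊆ ⋃ p ∈ F, B p := by
    rintro x ⟨hx, p, hp⟩
    have hcoord : ∀ i, |(q : ℝ) * x i - p i| < ψq := by
      intro i
      have h1' : |((q : ℝ) • x - fun i => ((p i : ℝ))) i| ≤ ‖(q : ℝ) • x - fun i => ((p i : ℝ))‖ :=
        norm_le_pi_norm ((q : ℝ) • x - fun i => ((p i : ℝ))) i
      simpa [Pi.sub_apply, Pi.smul_apply, smul_eq_mul] using lt_of_le_of_lt h1' hp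
    have hxi : ∀ i, 0 ≤ x i ∧ x i ≤ 1 := by
      intro i; exact (hx i (Set.mem_univ i) : x i ∈ Set.Icc (0:ℝ) 1)
    have hpF : p ∈ F := by
      rw [hF, Fintype.mem_piFinset]
      intro i
      have h2 := abs_lt.mp (hcoord i)
      have hxl := (hxi i).1; have hxu := (hxi i).2
      have hl : (-1 : ℝ) < p i := by nlinarith [h2.2]
      have hu : (p i : ℝ) < q + 1 := by nlinarith [h2.1]
      rw [Finset.mem_Icc]
      constructor
      · have : (-1 : ℤ) < p i := by exact_mod_cast hl
        omega
      · have : p i < (q : ℤ) + 1 := by exact_mod_cast hu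
        omega
    refine Set.mem_biUnion hpF ?_
    intro i _
    constructor
    · have h2 := abs_lt.mp (hcoord i)
      rw [div_lt_iff₀ hq0]; nlinarith [h2.2]
    · have h2 := abs_lt.mp (hcoord i)
      rw [lt_div_iff₀ hq0]; nlinarith [h2.1]
  refine le_trans (measure_mono hsub) ?_
  refine le_trans (measure_biUnion_finset_le F B) ?_
  have hvol : ∀ p, MeasureTheory.volume (B p) = ENNReal.ofReal (2 * ψq / q) ^ k := by
    intro p
    rw [hB]
    rw [volume_pi_pi]
    have : ∀ i : Fin k, MeasureTheory.volume (Set.Ioo (((p i : ℝ) - ψq) / q) (((p i : ℝ) + ψq) / q))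
        = ENNReal.ofReal (2 * ψq / q) := by
      intro i
      rw [Real.volume_Ioo]
      congr 1
      field_simp
      ring
    simp [this]
  have hcard : F.card = (q + 1) ^ k := by
    rw [hF, Fintype.card_piFinset]
    simp [Int.card_Icc]
  calc ∑ p ∈ F, MeasureTheory.volume (B p)
      = F.card * ENNReal.ofReal (2 * ψq / q) ^ k := by
        rw [Finset.sum_congr rfl fun p _ => hvol p, Finset.sum_const, nsmul_eq_mul]
    _ = ((q : ℝ≥0∞) + 1) ^ k * ENNReal.ofReal (2 * ψq / q) ^ k := by
        rw [hcard]; push_cast; ring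
    _ = (((q : ℝ≥0∞) + 1) * ENNReal.ofReal (2 * ψq / q)) ^ k := by rw [mul_pow]
    _ ≤ ENNReal.ofReal (8 * ψq) ^ k := by
        gcongr
        have heq : ((q : ℝ≥0∞) + 1) = ENNReal.ofReal ((q : ℝ) + 1) := by
          rw [ENNReal.ofReal_add (by positivity) zero_le_one]; simp
        rw [heq, ← ENNReal.ofReal_mul (by positivity)]
        apply ENNReal.ofReal_le_ofReal
        have hqr : (1:ℝ) ≤ q := by exact_mod_cast hq
        have hq1 : (q : ℝ) + 1 ≤ 2 * q := by linarith
        calc ((q : ℝ) + 1) * (2 * ψq / q) ≤ 2 * q * (2 * ψq / q) := by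
              apply mul_le_mul_of_nonneg_right hq1; positivity
          _ = 4 * ψq := by field_simp; ring
          _ ≤ 8 * ψq := by nlinarith
    _ = ENNReal.ofReal ((8 * ψq) ^ k) := by rw [ENNReal.ofReal_pow (by positivity)]


/-- Convergence part of Khintchine's theorem in `ℝ^k`. -/
theorem stmt2 (k : ℕ) (hk : 1 ≤ k) (ψ : ℕ → ℝ) (hψ : ∀ q, 0 ≤ ψ q)
    (hsum : Summable fun q : ℕ => ψ q ^ k) :
    MeasureTheory.volume
      {x ∈ Set.univ.pi fun _ : Fin k => Set.Icc (0 : ℝ) 1 |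
        {pq : (Fin k → ℤ) × ℕ | 1 ≤ pq.2 ∧
          ‖(pq.2 : ℝ) • x - fun i => ((pq.1 i : ℝ))‖ < ψ pq.2}.Infinite} = 0 := by
  classical
  set cube : Set (Fin k → ℝ) := Set.univ.pi fun _ : Fin k => Set.Icc (0 : ℝ) 1 with hcube
  set E : ℕ → Set (Fin k → ℝ) := fun q =>
    {x | x ∈ cube ∧ 1 ≤ q ∧ ∃ p : Fin k → ℤ, ‖(q : ℝ) • x - fun i => ((p i : ℝ))‖ < ψ q}
    with hE
  -- measure bound
  have hμ : ∀ q, MeasureTheory.volume (E q) ≤ ENNReal.ofReal ((8 * min (ψ q) 1) ^ k) := by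
    intro q
    by_cases hq : 1 ≤ q
    · by_cases h0 : 0 < ψ q
      · by_cases h1 : ψ q ≤ 1
        · rw [min_eq_left h1]
          refine le_trans (measure_mono ?_) (Evol k q hq (ψ q) h0 h1)
          rintro x ⟨hxc, -, hp⟩; exact ⟨hxc, hp⟩
        · rw [min_eq_right (le_of_not_ge h1)]
          have hc : MeasureTheory.volume cube = 1 := by
            rw [hcube, volume_pi_pi]
            simp [Real.volume_Icc]
          calc MeasureTheory.volume (E q) ≤ MeasureTheory.volume cube :=
                measure_mono fun x hx => hx.1
            _ = 1 := hc
            _ ≤ ENNReal.ofReal ((8 * 1) ^ k) := by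
                rw [ENNReal.one_le_ofReal]
                exact one_le_pow₀ (by norm_num)
      · have : E q = ∅ := by
          ext x; simp only [hE, Set.mem_setOf_eq, Set.mem_empty_iff_false, iff_false]
          rintro ⟨-, -, p, hp⟩
          exact h0 (lt_of_le_of_lt (norm_nonneg _) hp)
        simp [this]
    · have : E q = ∅ := by
        ext x; simp only [hE, Set.mem_setOf_eq, Set.mem_empty_iff_false, iff_false]
        rintro ⟨-, h, -⟩; exact hq h
      simp [this]
  -- summability
  have hg0 : ∀ q, 0 ≤ (8 * min (ψ q) 1) ^ k := by
    intro q
    have : 0 ≤ min (ψ q) 1 := le_min (hψ q) zero_le_one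
    positivity
  have hgsum : Summable fun q => (8 * min (ψ q) 1) ^ k := by
    refine Summable.of_nonneg_of_le hg0 ?_ (hsum.mul_left ((8:ℝ) ^ k))
    intro q
    rw [mul_pow]
    have h1 : 0 ≤ min (ψ q) 1 := le_min (hψ q) zero_le_one
    have h2 : min (ψ q) 1 ≤ ψ q := min_le_left _ _
    exact mul_le_mul_of_nonneg_left (pow_le_pow_left₀ h1 h2 k) (by positivity)
  have hne : ∑' q, MeasureTheory.volume (E q) ≠ ⊤ := by
    refine ne_top_of_le_ne_top ?_ (ENNReal.tsum_le_tsum hμ)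
    rw [← ENNReal.ofReal_tsum_of_nonneg hg0 hgsum]
    exact ENNReal.ofReal_ne_top
  -- inclusion into limsup
  have hsub : {x ∈ cube |
        {pq : (Fin k → ℤ) × ℕ | 1 ≤ pq.2 ∧
          ‖(pq.2 : ℝ) • x - fun i => ((pq.1 i : ℝ))‖ < ψ pq.2}.Infinite}
      ⊆ Filter.limsup E Filter.atTop := by
    rintro x ⟨hxc, hinf⟩
    rw [mem_limsup_iff_frequently_mem, Filter.frequently_atTop]
    intro N
    set S : Set ((Fin k → ℤ) × ℕ) := {pq | 1 ≤ pq.2 ∧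
      ‖(pq.2 : ℝ) • x - fun i => ((pq.1 i : ℝ))‖ < ψ pq.2} with hS
    have hQ : (Prod.snd '' S).Infinite := by
      intro hQfin
      apply hinf
      refine Set.Finite.subset
        (Set.Finite.biUnion hQfin fun q _ =>
          Set.Finite.prod (fiber_finite k q x (ψ q)) (Set.finite_singleton q)) ?_
      intro pq hpq
      exact Set.mem_biUnion ⟨pq, hpq, rfl⟩ ⟨hpq.2, rfl⟩
    obtain ⟨q, hqQ, hNq⟩ := hQ.exists_gt N
    obtain ⟨pq, hpqS, rfl⟩ := hqQ
    exact ⟨pq.2, le_of_lt hNq, hxc, hpqS.1, pq.1, hpqS.2⟩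
  exact measure_mono_null hsub (MeasureTheory.measure_limsup_atTop_eq_zero hne)
end

section
/- Let X be a subset of ℝ^k, δ > 0, and μ a δ-Ahlfors–David regular Borel probability measure supported on X. Let (B_n = B(x_n, r_n)) be a sequence of balls in X with r_n → 0 such that μ(limsup_n B_n) = 1. Then for every t ≥ 1, the Hausdorff dimension of limsup_n B(x_n, r_n^t) is at least δ/t. -/
open Set MeasureTheory Metric Filter Topology ENNReal NNReal

/-!
Since `μ`-almost every point lies in infinitely many balls `B(x n, r n)`, a Vitali covering
argument finds, inside any ball `B(y, ρ)` centred in `S`, finitely many of them, arbitrarily small,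
with pairwise disjoint triples and total mass `≳ ρ ^ δ`. Iterating this inside the shrunk balls
`B(x n, r n ^ t)` builds a Cantor set contained in the limsup of the shrunk balls. Each node passes
its weight to its children in proportion to their `μ`-mass; taking the children so small that
`r ^ (δ - s t) ≲ ρ ^ (δ - s)`, a node of radius `r ^ t` receives weight `≲ (r ^ t) ^ s`, and since
siblings are separated every ball of radius `τ` receives weight `≲ τ ^ s`. A discrete mass
distribution principle then gives `μH[s] > 0` on the Cantor set for every `s < δ / t`.
-/

lemma Real.rpow_mul_rpow_le_rpow_mul_rpow {τ ρ s δ : ℝ} (hτ : 0 < τ) (hτρ : τ ≤ ρ) (hsδ : s ≤ δ) :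
    ρ ^ s * τ ^ δ ≤ ρ ^ δ * τ ^ s := by
  have hρ : 0 < ρ := hτ.trans_le hτρ
  calc ρ ^ s * τ ^ δ = ρ ^ s * τ ^ (δ - s) * τ ^ s := by
        rw [mul_assoc, ← Real.rpow_add hτ]; ring_nf
    _ ≤ ρ ^ s * ρ ^ (δ - s) * τ ^ s := by
        have := Real.rpow_le_rpow hτ.le hτρ (sub_nonneg.2 hsδ)
        gcongr
    _ = ρ ^ δ * τ ^ s := by rw [← Real.rpow_add hρ]; ring_nf

section MassDistribution

variable {X ι : Type*} [MetricSpace X]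

lemma le_of_disjoint_closedBall_of_nonempty_inter {a b z : X} {ra rb τ : ℝ}
    (hdisj : Disjoint (closedBall a (3 * ra)) (closedBall b (3 * rb)))
    (ha : (closedBall a ra ∩ closedBall z τ).Nonempty)
    (hb : (closedBall b rb ∩ closedBall z τ).Nonempty) : ra ≤ τ := by
  by_contra! hτ
  obtain ⟨p, hpa, hpz⟩ := ha
  obtain ⟨q, hqb, hqz⟩ := hb
  have hrb : 0 ≤ rb := nonempty_closedBall.1 ⟨q, hqb⟩
  have hqa : q ∈ closedBall a (3 * ra) := by
    rw [mem_closedBall] at *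
    linarith [dist_triangle4 q z p a, dist_comm z p]
  exact hdisj.ne_of_mem hqa (closedBall_subset_closedBall (by linarith) hqb) rfl

lemma rpow_two_mul_max_le {d η s : ℝ} (hd : 0 ≤ d) (hη : 0 ≤ η) :
    (2 * max d η) ^ s ≤ 2 ^ s * (d ^ s + η ^ s) := by
  rw [Real.mul_rpow zero_le_two (le_max_of_le_left hd)]
  gcongr
  rcases le_total d η with h | h
  · rw [max_eq_right h]; linarith [Real.rpow_nonneg hd s]
  · rw [max_eq_left h]; linarith [Real.rpow_nonneg hη s]

lemma ENNReal.ofReal_rpow_two_mul_max_le {d : ℝ≥0∞} (hd : d ≠ ⊤) {η s : ℝ} (hη : 0 ≤ η)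
    (hs : 0 ≤ s) :
    ENNReal.ofReal ((2 * max d.toReal η) ^ s) ≤
      ENNReal.ofReal (2 ^ s) * (d ^ s + ENNReal.ofReal (η ^ s)) :=
  calc _ ≤ ENNReal.ofReal (2 ^ s * (d.toReal ^ s + η ^ s)) :=
        ENNReal.ofReal_le_ofReal (rpow_two_mul_max_le ENNReal.toReal_nonneg hη)
    _ = _ := by
        rw [ENNReal.ofReal_mul (by positivity), ENNReal.ofReal_add (by positivity) (by positivity),
          ← ENNReal.ofReal_rpow_of_nonneg ENNReal.toReal_nonneg hs, ENNReal.ofReal_toReal hd]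

lemma exists_pos_le_tsum_ofReal_rpow_lt {ε : ℝ≥0∞} (hε : ε ≠ 0) {s b : ℝ} (hs : 0 < s)
    (hb : 0 < b) : ∃ η : ℕ → ℝ, (∀ j, 0 < η j ∧ η j ≤ b) ∧ ∑' j, ENNReal.ofReal (η j ^ s) < ε := by
  obtain ⟨e, he, hesum⟩ := ENNReal.exists_pos_sum_of_countable hε ℕ
  have hη : ∀ j, 0 < min ((e j : ℝ) ^ s⁻¹) b := fun j =>
    lt_min (Real.rpow_pos_of_pos (NNReal.coe_pos.2 (he j)) _) hb
  refine ⟨fun j => min ((e j : ℝ) ^ s⁻¹) b, fun j => ⟨hη j, min_le_right _ _⟩,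
    (ENNReal.tsum_le_tsum fun j => ?_).trans_lt hesum⟩
  rw [← ENNReal.ofReal_coe_nnreal]
  refine ENNReal.ofReal_le_ofReal ?_
  calc min ((e j : ℝ) ^ s⁻¹) b ^ s ≤ ((e j : ℝ) ^ s⁻¹) ^ s :=
        Real.rpow_le_rpow (hη j).le (min_le_left _ _) hs.le
    _ = e j := by rw [← Real.rpow_mul (NNReal.coe_nonneg _), inv_mul_cancel₀ hs.ne', Real.rpow_one]

lemma subset_ball_two_mul_max {t : Set X} {p : X} (hp : p ∈ t) (ht : ediam t ≠ ⊤) {η : ℝ}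
    (hη : 0 < η) : t ⊆ ball p (2 * max (ediam t).toReal η) := fun q hq => by
  rw [mem_ball, dist_edist]
  calc (edist q p).toReal ≤ (ediam t).toReal := ENNReal.toReal_mono ht (edist_le_ediam_of_mem hq hp)
    _ ≤ max (ediam t).toReal η := le_max_left _ _
    _ < 2 * max (ediam t).toReal η := by linarith [lt_max_of_lt_right hη (b := (ediam t).toReal)]

lemma iSup_nonempty_ediam_rpow {t : Set X} {s : ℝ} (hs : 0 < s) :
    (⨆ _ : t.Nonempty, ediam t ^ s) = ediam t ^ s := by
  rcases t.eq_empty_or_nonempty with rfl | ht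
  · simp [ENNReal.zero_rpow_of_pos hs]
  · exact iSup_pos ht

open Classical in
structure IsDiscreteFrostman (E : ℕ → Set X) (P : ℕ → Finset ι) (c : ι → X) (w : ι → ℝ)
    (s A τ₀ : ℝ) : Prop where
  antitone : Antitone E
  mem : ∀ m, ∀ q ∈ P m, c q ∈ E m
  nonneg : ∀ m, ∀ q ∈ P m, 0 ≤ w q
  sum_eq_one : ∀ m, ∑ q ∈ P m, w q = 1
  eventually_sum_le : ∀ z τ, 0 < τ → τ ≤ τ₀ →
    ∀ᶠ m in atTop, ∑ q ∈ P m with c q ∈ closedBall z τ, w q ≤ A * τ ^ s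

namespace IsDiscreteFrostman

variable {E : ℕ → Set X} {P : ℕ → Finset ι} {c : ι → X} {w : ι → ℝ} {s A τ₀ : ℝ}

lemma one_le_sum_rpow_of_subset_biUnion (h : IsDiscreteFrostman E P c w s A τ₀) {κ : Type*}
    {J : Finset κ} {z : κ → X} {τ : κ → ℝ} (hτ : ∀ j ∈ J, 0 < τ j ∧ τ j ≤ τ₀) {M₀ : ℕ}
    (hcover : E M₀ ⊆ ⋃ j ∈ J, closedBall (z j) (τ j)) :
    1 ≤ A * ∑ j ∈ J, τ j ^ s := by
  classical
  obtain ⟨M, hM₀, hM⟩ := ((eventually_ge_atTop M₀).and ((eventually_all_finset J).2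
    fun j hj => h.eventually_sum_le (z j) (τ j) (hτ j hj).1 (hτ j hj).2)).exists
  have hcovered : ∀ q ∈ P M, w q ≤ ∑ j ∈ J, if c q ∈ closedBall (z j) (τ j) then w q else 0 := by
    intro q hq
    obtain ⟨j, hj, hqj⟩ := mem_iUnion₂.1 (hcover (h.antitone hM₀ (h.mem M q hq)))
    calc w q = if c q ∈ closedBall (z j) (τ j) then w q else 0 := (if_pos hqj).symm
      _ ≤ _ := Finset.single_le_sum (f := fun j => if c q ∈ closedBall (z j) (τ j) then w q else 0)
          (fun j _ => by split_ifs <;> simp [h.nonneg M q hq]) hj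
  calc (1 : ℝ) = ∑ q ∈ P M, w q := (h.sum_eq_one M).symm
    _ ≤ ∑ q ∈ P M, ∑ j ∈ J, if c q ∈ closedBall (z j) (τ j) then w q else 0 :=
      Finset.sum_le_sum hcovered
    _ = ∑ j ∈ J, ∑ q ∈ P M with c q ∈ closedBall (z j) (τ j), w q := by
      rw [Finset.sum_comm]; simp only [Finset.sum_filter]
    _ ≤ ∑ j ∈ J, A * τ j ^ s := Finset.sum_le_sum hM
    _ = A * ∑ j ∈ J, τ j ^ s := (Finset.mul_sum ..).symm

lemma one_le_tsum_rpow_of_subset_iUnion_ball (h : IsDiscreteFrostman E P c w s A τ₀)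
    (hEc : ∀ m, IsCompact (E m)) {z : ℕ → X} {τ : ℕ → ℝ} (hτ : ∀ j, 0 < τ j ∧ τ j ≤ τ₀)
    (hcover : ⋂ m, E m ⊆ ⋃ j, ball (z j) (τ j)) :
    1 ≤ ENNReal.ofReal A * ∑' j, ENNReal.ofReal (τ j ^ s) := by
  obtain ⟨M₀, hM₀⟩ := exists_subset_nhds_of_isCompact' h.antitone.directed_ge hEc
    (fun m => (hEc m).isClosed) fun _ hy =>
      (isOpen_iUnion fun _ => isOpen_ball).mem_nhds (hcover hy)
  obtain ⟨J, hJ⟩ := (hEc M₀).elim_finite_subcover _ (fun j => isOpen_ball) hM₀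
  have hJτ : 1 ≤ A * ∑ j ∈ J, τ j ^ s :=
    h.one_le_sum_rpow_of_subset_biUnion (fun j _ => hτ j)
      (hJ.trans (iUnion₂_mono fun j _ => ball_subset_closedBall))
  have hnonneg : ∀ j, 0 ≤ τ j ^ s := fun j => Real.rpow_nonneg (hτ j).1.le s
  calc (1 : ℝ≥0∞) ≤ ENNReal.ofReal (A * ∑ j ∈ J, τ j ^ s) := by
        rw [← ENNReal.ofReal_one]; exact ENNReal.ofReal_le_ofReal hJτ
    _ = ENNReal.ofReal A * ∑ j ∈ J, ENNReal.ofReal (τ j ^ s) := by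
        rw [ENNReal.ofReal_mul' (Finset.sum_nonneg fun j _ => hnonneg j),
          ENNReal.ofReal_sum_of_nonneg fun j _ => hnonneg j]
    _ ≤ ENNReal.ofReal A * ∑' j, ENNReal.ofReal (τ j ^ s) := by
        gcongr; exact ENNReal.sum_le_tsum J

open Classical in
lemma inv_le_tsum_ediam_rpow (h : IsDiscreteFrostman E P c w s A τ₀)
    (hEc : ∀ m, IsCompact (E m)) (hA : 0 < A) (hs : 0 < s) (hτ₀ : 0 < τ₀) {t : ℕ → Set X}
    (hcover : ⋂ m, E m ⊆ ⋃ j, t j)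
    (hdiam : ∀ j, ediam (t j) ≤ ENNReal.ofReal (τ₀ / 4)) :
    (ENNReal.ofReal (2 ^ s * A))⁻¹ ≤ ∑' j, ⨆ _ : (t j).Nonempty, ediam (t j) ^ s := by
  obtain ⟨x₀⟩ : Nonempty X := by
    obtain ⟨q, -⟩ := Finset.nonempty_of_sum_ne_zero ((h.sum_eq_one 0).trans_ne one_ne_zero)
    exact ⟨c q⟩
  have hB : 0 < 2 ^ s * A := mul_pos (Real.rpow_pos_of_pos two_pos s) hA
  refine ENNReal.le_of_forall_pos_le_add fun ε hε _ => ?_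
  rw [ENNReal.inv_le_iff_le_mul (fun _ => (ENNReal.ofReal_pos.2 hB).ne')
    (fun htop => absurd htop ENNReal.ofReal_ne_top)]
  -- enlarge each `t j` to an open ball of radius `τ j`, at a cost `η j ^ s` summing to `< ε`
  obtain ⟨η, hη, hηsum⟩ :=
    exists_pos_le_tsum_ofReal_rpow_lt (ENNReal.coe_ne_zero.2 hε.ne') hs (by positivity : 0 < τ₀ / 4)
  have hfin : ∀ j, ediam (t j) ≠ ⊤ := fun j => ne_top_of_le_ne_top ENNReal.ofReal_ne_top (hdiam j)
  set τ : ℕ → ℝ := fun j => 2 * max (ediam (t j)).toReal (η j)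
  set z : ℕ → X := fun j => if hne : (t j).Nonempty then hne.some else x₀
  have hball : ⋂ m, E m ⊆ ⋃ j, ball (z j) (τ j) := by
    refine hcover.trans (iUnion_mono fun j => ?_)
    rcases (t j).eq_empty_or_nonempty with hempty | hne
    · simp [hempty]
    · simpa only [z, dif_pos hne] using subset_ball_two_mul_max hne.some_mem (hfin j) (hη j).1
  have hτ : ∀ j, 0 < τ j ∧ τ j ≤ τ₀ := fun j =>
    ⟨by positivity [lt_max_of_lt_right (hη j).1 (b := (ediam (t j)).toReal)], by
      linarith [max_le (ENNReal.toReal_le_of_le_ofReal (by positivity) (hdiam j)) (hη j).2]⟩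
  calc 1 ≤ ENNReal.ofReal A * ∑' j, ENNReal.ofReal (τ j ^ s) :=
        h.one_le_tsum_rpow_of_subset_iUnion_ball hEc hτ hball
    _ ≤ ENNReal.ofReal A * ∑' j, ENNReal.ofReal (2 ^ s) *
          (ediam (t j) ^ s + ENNReal.ofReal (η j ^ s)) := by
        gcongr with j; exact ENNReal.ofReal_rpow_two_mul_max_le (hfin j) (hη j).1.le hs.le
    _ = ENNReal.ofReal (2 ^ s * A) *
          (∑' j, ediam (t j) ^ s + ∑' j, ENNReal.ofReal (η j ^ s)) := by
        rw [ENNReal.tsum_mul_left, ENNReal.tsum_add, ENNReal.ofReal_mul (by positivity)]; ring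
    _ ≤ _ := by rw [tsum_congr fun j => iSup_nonempty_ediam_rpow (t := t j) hs]; gcongr

theorem hausdorffMeasure_iInter_ne_zero [MeasurableSpace X] [BorelSpace X]
    (h : IsDiscreteFrostman E P c w s A τ₀) (hEc : ∀ m, IsCompact (E m)) (hA : 0 < A) (hs : 0 < s)
    (hτ₀ : 0 < τ₀) :
    μH[s] (⋂ m, E m) ≠ 0 := by
  have hle : (ENNReal.ofReal (2 ^ s * A))⁻¹ ≤ μH[s] (⋂ m, E m) := by
    rw [Measure.hausdorffMeasure_apply]
    refine le_iSup₂_of_le (ENNReal.ofReal (τ₀ / 4)) (ENNReal.ofReal_pos.2 (by positivity))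
      (le_iInf₂ fun t ht => le_iInf fun hdiam => ?_)
    exact h.inv_le_tsum_ediam_rpow hEc hA hs hτ₀ ht hdiam
  exact ((ENNReal.inv_pos.2 ENNReal.ofReal_ne_top).trans_le hle).ne'

end IsDiscreteFrostman

end MassDistribution

lemma mem_limsupSet {X : Type*} {A : ℕ → Set X} {y : X} :
    y ∈ limsupSet A ↔ ∀ N, ∃ n, N ≤ n ∧ y ∈ A n := by
  simp [limsupSet]

lemma MeasurableSet.limsupSet {X : Type*} [MeasurableSpace X] {A : ℕ → Set X}
    (hA : ∀ n, MeasurableSet (A n)) : MeasurableSet (limsupSet A) :=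
  .iInter fun _ => .iUnion fun n => .iUnion fun _ => hA n

lemma ENNReal.exists_finset_lt_sum_of_lt_tsum {u : Set ℕ} {f : ℕ → ℝ≥0∞} {a : ℝ≥0∞}
    (h : a < ∑' n : u, f n) : ∃ J : Finset ℕ, (∀ n ∈ J, n ∈ u) ∧ a < ∑ n ∈ J, f n := by
  classical
  rw [tsum_subtype, ENNReal.tsum_eq_iSup_nat] at h
  obtain ⟨M, hM⟩ := lt_iSup_iff.1 h
  refine ⟨{n ∈ Finset.range M | n ∈ u}, fun n hn => (Finset.mem_filter.1 hn).2, ?_⟩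
  rwa [← Finset.sum_indicator_eq_sum_filter]

structure RegularBallSystem (X : Type*) [MetricSpace X] [MeasurableSpace X] where
  μ : Measure X
  S : Set X
  δ : ℝ
  c₁ : ℝ
  c₂ : ℝ
  r₀ : ℝ
  c₁_pos : 0 < c₁
  c₂_pos : 0 < c₂
  r₀_pos : 0 < r₀
  regular : ∀ y ∈ S, ∀ ρ : ℝ, 0 < ρ → ρ < r₀ →
    ENNReal.ofReal (c₁ * ρ ^ δ) ≤ μ (closedBall y ρ) ∧
      μ (closedBall y ρ) ≤ ENNReal.ofReal (c₂ * ρ ^ δ)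
  x : ℕ → X
  r : ℕ → ℝ
  x_mem : ∀ n, x n ∈ S
  r_pos : ∀ n, 0 < r n
  tendsto_r : Tendsto r atTop (𝓝 0)
  ae_mem_limsup : ∀ᵐ y ∂μ, y ∈ limsupSet fun n => closedBall (x n) (r n)

namespace RegularBallSystem

variable {X : Type*} [MetricSpace X] [MeasurableSpace X] (D : RegularBallSystem X)

lemma measure_closedBall_ne_top {y : X} (hy : y ∈ D.S) {ρ : ℝ} (hρ : 0 < ρ) (hρr : ρ < D.r₀) :
    D.μ (closedBall y ρ) ≠ ⊤ :=
  ne_top_of_le_ne_top ENNReal.ofReal_ne_top (D.regular y hy ρ hρ hρr).2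

lemma measureReal_closedBall_le {y : X} (hy : y ∈ D.S) {ρ : ℝ} (hρ : 0 < ρ) (hρr : ρ < D.r₀) :
    D.μ.real (closedBall y ρ) ≤ D.c₂ * ρ ^ D.δ :=
  ENNReal.toReal_le_of_le_ofReal (by have := D.c₂_pos; positivity) (D.regular y hy ρ hρ hρr).2

lemma measure_closedBall_le_mul {y : X} (hy : y ∈ D.S) {ρ Λ : ℝ} (hρ : 0 < ρ) (hρr : ρ < D.r₀)
    (hΛ : 0 < Λ) (hΛρ : Λ * ρ < D.r₀) :
    D.μ (closedBall y (Λ * ρ)) ≤ ENNReal.ofReal (D.c₂ * Λ ^ D.δ / D.c₁) * D.μ (closedBall y ρ) := by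
  have := D.c₁_pos
  calc D.μ (closedBall y (Λ * ρ)) ≤ ENNReal.ofReal (D.c₂ * (Λ * ρ) ^ D.δ) :=
        (D.regular y hy _ (by positivity) hΛρ).2
    _ = ENNReal.ofReal (D.c₂ * Λ ^ D.δ / D.c₁) * ENNReal.ofReal (D.c₁ * ρ ^ D.δ) := by
        rw [← ENNReal.ofReal_mul (by have := D.c₂_pos; positivity),
          Real.mul_rpow hΛ.le hρ.le]
        congr 1
        field_simp
    _ ≤ _ := by gcongr; exact (D.regular y hy ρ hρ hρr).1

/-- `c₁ (ρ / 2) ^ δ` divided by the doubling factor `c₂ 12 ^ δ / c₁` of the Vitali enlargement,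
halved to leave room for passing to a finite subfamily. -/
noncomputable def κ : ℝ := D.c₁ ^ 2 / (2 * D.c₂ * 24 ^ D.δ)

lemma κ_pos : 0 < D.κ := by
  have := D.c₁_pos; have := D.c₂_pos; unfold κ; positivity

lemma two_mul_κ_mul_rpow (ρ : ℝ) (hρ : 0 < ρ) :
    D.c₂ * 12 ^ D.δ / D.c₁ * (2 * (D.κ * ρ ^ D.δ)) = D.c₁ * (ρ / 2) ^ D.δ := by
  have := D.c₁_pos; have := D.c₂_pos
  have h24 : (24 : ℝ) ^ D.δ = 12 ^ D.δ * 2 ^ D.δ := by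
    rw [← Real.mul_rpow (by norm_num) (by norm_num)]; norm_num
  rw [κ, Real.div_rpow hρ.le zero_le_two, h24]
  field_simp

lemma exists_vitali_subfamily (y : X) (R : ℝ) {ε : ℝ} (hε : 0 < ε) (N : ℕ) :
    ∃ u : Set ℕ, (∀ n ∈ u, N ≤ n ∧ D.r n < ε ∧
        (closedBall (D.x n) (D.r n) ∩ closedBall y R).Nonempty) ∧
      u.PairwiseDisjoint (fun n => closedBall (D.x n) (3 * D.r n)) ∧
      closedBall y R ∩ limsupSet (fun n => closedBall (D.x n) (D.r n)) ⊆
        ⋃ n ∈ u, closedBall (D.x n) (12 * D.r n) := by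
  obtain ⟨N', hN'⟩ := eventually_atTop.1 (D.tendsto_r.eventually (gt_mem_nhds hε))
  set F := {n | max N N' ≤ n ∧ (closedBall (D.x n) (D.r n) ∩ closedBall y R).Nonempty}
  have hF : ∀ n ∈ F, N ≤ n ∧ D.r n < ε := fun n hn =>
    ⟨le_of_max_le_left hn.1, hN' n (le_of_max_le_right hn.1)⟩
  obtain ⟨u, huF, hdisj, hcov⟩ := Vitali.exists_disjoint_subfamily_covering_enlargement_closedBall
    F D.x (fun n => 3 * D.r n) (3 * ε) (fun n hn => by linarith [(hF n hn).2]) 4 (by norm_num)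
  refine ⟨u, fun n hn => ⟨(hF n (huF hn)).1, (hF n (huF hn)).2, (huF hn).2⟩, hdisj, ?_⟩
  rintro p ⟨hpy, hpL⟩
  obtain ⟨n, hn, hpn⟩ := mem_limsupSet.1 hpL (max N N')
  obtain ⟨b, hbu, hb⟩ := hcov n ⟨hn, p, hpn, hpy⟩
  refine mem_iUnion₂.2 ⟨b, hbu, ?_⟩
  have := hb (closedBall_subset_closedBall (by linarith [D.r_pos n]) hpn)
  rwa [← mul_assoc, show (4 : ℝ) * 3 = 12 by norm_num] at this

lemma exists_pairwiseDisjoint_mass_ge {y : X} (hy : y ∈ D.S) {ρ : ℝ} (hρ : 0 < ρ)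
    (hρr : ρ < D.r₀) {ε : ℝ} (hε : 0 < ε) (N : ℕ) :
    ∃ u : Set ℕ, (∀ n ∈ u, N ≤ n ∧ D.r n ≤ ε ∧ closedBall (D.x n) (D.r n) ⊆ closedBall y ρ) ∧
      u.PairwiseDisjoint (fun n => closedBall (D.x n) (3 * D.r n)) ∧
      ENNReal.ofReal (2 * (D.κ * ρ ^ D.δ)) ≤ ∑' n : u, D.μ (closedBall (D.x n) (D.r n)) := by
  set ε' := min ε (min (ρ / 4) (D.r₀ / 12))
  have hε'ε : ε' ≤ ε := min_le_left _ _
  have hε'ρ : ε' ≤ ρ / 4 := (min_le_right _ _).trans (min_le_left _ _)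
  have hε'r : ε' ≤ D.r₀ / 12 := (min_le_right _ _).trans (min_le_right _ _)
  have hε' : 0 < ε' := lt_min hε (lt_min (by positivity) (by linarith [D.r₀_pos]))
  obtain ⟨u, hu, hdisj, hsub⟩ := D.exists_vitali_subfamily y (ρ / 2) hε' N
  refine ⟨u, fun n hn => ?_, hdisj, ?_⟩
  · obtain ⟨hNn, hrn, p, hpn, hpy⟩ := hu n hn
    refine ⟨hNn, by linarith, closedBall_subset_closedBall' ?_⟩
    rw [mem_closedBall] at hpn hpy
    linarith [dist_triangle_left (D.x n) y p]
  have hK : 0 < D.c₂ * 12 ^ D.δ / D.c₁ := by have := D.c₁_pos; have := D.c₂_pos; positivity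
  have hdouble : ∀ n ∈ u, D.μ (closedBall (D.x n) (12 * D.r n)) ≤
      ENNReal.ofReal (D.c₂ * 12 ^ D.δ / D.c₁) * D.μ (closedBall (D.x n) (D.r n)) :=
    fun n hn => D.measure_closedBall_le_mul (D.x_mem n) (D.r_pos n)
      (by linarith [(hu n hn).2.1, D.r_pos n]) (by norm_num) (by linarith [(hu n hn).2.1])
  refine (ENNReal.mul_le_mul_iff_right (ENNReal.ofReal_pos.2 hK).ne' ENNReal.ofReal_ne_top).1 ?_
  calc ENNReal.ofReal (D.c₂ * 12 ^ D.δ / D.c₁) * ENNReal.ofReal (2 * (D.κ * ρ ^ D.δ))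
      = ENNReal.ofReal (D.c₁ * (ρ / 2) ^ D.δ) := by
        rw [← ENNReal.ofReal_mul hK.le, D.two_mul_κ_mul_rpow ρ hρ]
    _ ≤ D.μ (closedBall y (ρ / 2)) := (D.regular y hy _ (by positivity) (by linarith)).1
    _ = D.μ (closedBall y (ρ / 2) ∩ limsupSet fun n => closedBall (D.x n) (D.r n)) :=
        (measure_inter_conull (ae_iff.1 D.ae_mem_limsup)).symm
    _ ≤ ∑' n : u, D.μ (closedBall (D.x n) (12 * D.r n)) :=
        (measure_mono hsub).trans (measure_biUnion_le _ u.to_countable _)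
    _ ≤ ∑' n : u, ENNReal.ofReal (D.c₂ * 12 ^ D.δ / D.c₁) * D.μ (closedBall (D.x n) (D.r n)) :=
        ENNReal.tsum_le_tsum fun n => hdouble n n.2
    _ = _ := ENNReal.tsum_mul_left

lemma exists_children {y : X} (hy : y ∈ D.S) {ρ : ℝ} (hρ : 0 < ρ) (hρr : ρ < D.r₀) {ε : ℝ}
    (hε : 0 < ε) (N : ℕ) :
    ∃ J : Finset ℕ, (∀ n ∈ J, N ≤ n ∧ D.r n ≤ ε ∧ closedBall (D.x n) (D.r n) ⊆ closedBall y ρ) ∧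
      (J : Set ℕ).PairwiseDisjoint (fun n => closedBall (D.x n) (3 * D.r n)) ∧
      D.κ * ρ ^ D.δ ≤ ∑ n ∈ J, D.μ.real (closedBall (D.x n) (D.r n)) := by
  obtain ⟨u, hu, hdisj, hmass⟩ := D.exists_pairwiseDisjoint_mass_ge hy hρ hρr hε N
  have hκρ : 0 < D.κ * ρ ^ D.δ := mul_pos D.κ_pos (Real.rpow_pos_of_pos hρ _)
  have hlt : ENNReal.ofReal (D.κ * ρ ^ D.δ) < ∑' n : u, D.μ (closedBall (D.x n) (D.r n)) :=
    ((ENNReal.ofReal_lt_ofReal_iff (by linarith)).2 (by linarith)).trans_le hmass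
  obtain ⟨J, hJu, hJ⟩ := ENNReal.exists_finset_lt_sum_of_lt_tsum
    (f := fun n => D.μ (closedBall (D.x n) (D.r n))) hlt
  have hfin : ∀ n ∈ J, D.μ (closedBall (D.x n) (D.r n)) ≠ ⊤ := fun n hn =>
    ne_top_of_le_ne_top (D.measure_closedBall_ne_top hy hρ hρr)
      (measure_mono (hu n (hJu n hn)).2.2)
  refine ⟨J, fun n hn => hu n (hJu n hn), hdisj.subset fun n hn => hJu n hn, ?_⟩
  simp only [measureReal_def]
  rw [← ENNReal.toReal_sum hfin]
  exact (ENNReal.ofReal_le_iff_le_toReal (ENNReal.sum_ne_top.2 hfin)).1 hJ.le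

lemma sum_measureReal_le_of_nonempty_inter [OpensMeasurableSpace X] {M : Finset ℕ}
    (hM : 1 < M.card) (hdisj : (M : Set ℕ).PairwiseDisjoint fun n => closedBall (D.x n) (3 * D.r n))
    {z : X} {τ : ℝ} (hτ : 0 < τ) (hτr : 5 * τ < D.r₀)
    (hmeet : ∀ n ∈ M, (closedBall (D.x n) (D.r n) ∩ closedBall z τ).Nonempty) :
    ∑ n ∈ M, D.μ.real (closedBall (D.x n) (D.r n)) ≤ D.c₂ * (5 * τ) ^ D.δ := by
  have hr : ∀ n ∈ M, D.r n ≤ τ := fun n hn => by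
    obtain ⟨m, hm, hmn⟩ := Finset.exists_mem_ne hM n
    exact le_of_disjoint_closedBall_of_nonempty_inter (hdisj hn hm hmn.symm) (hmeet n hn)
      (hmeet m hm)
  obtain ⟨a, ha⟩ := Finset.card_pos.1 (by omega : 0 < M.card)
  have hsub : ∀ n ∈ M, closedBall (D.x n) (D.r n) ⊆ closedBall (D.x a) (5 * τ) := fun n hn => by
    obtain ⟨p, hpn, hpz⟩ := hmeet n hn
    obtain ⟨q, hqa, hqz⟩ := hmeet a ha
    rw [mem_closedBall] at hpn hpz hqa hqz
    refine closedBall_subset_closedBall' ?_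
    linarith [dist_triangle4 (D.x n) p q (D.x a), dist_triangle p z q, dist_comm (D.x n) p,
      dist_comm z q, dist_comm (D.x a) q, hr n hn, hr a ha]
  have hfin : ∀ n ∈ M, D.μ (closedBall (D.x n) (D.r n)) ≠ ⊤ := fun n hn =>
    D.measure_closedBall_ne_top (D.x_mem n) (D.r_pos n) (by linarith [hr n hn])
  calc ∑ n ∈ M, D.μ.real (closedBall (D.x n) (D.r n))
      = D.μ.real (⋃ n ∈ M, closedBall (D.x n) (D.r n)) :=
        (measureReal_biUnion_finset (hdisj.mono fun n => closedBall_subset_closedBall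
          (by linarith [D.r_pos n])) (fun n _ => measurableSet_closedBall) hfin).symm
    _ ≤ D.μ.real (closedBall (D.x a) (5 * τ)) :=
        measureReal_mono (iUnion₂_subset hsub)
          (D.measure_closedBall_ne_top (D.x_mem a) (by positivity) hτr)
    _ ≤ D.c₂ * (5 * τ) ^ D.δ := D.measureReal_closedBall_le (D.x_mem a) (by positivity) hτr

end RegularBallSystem

structure CantorSetup (X : Type*) [MetricSpace X] [MeasurableSpace X]
    extends RegularBallSystem X where
  t : ℝ
  s : ℝ
  one_le_t : 1 ≤ t
  s_pos : 0 < s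
  s_mul_t_lt : s * t < δ

namespace CantorSetup

variable {X : Type*} [MetricSpace X] [MeasurableSpace X] (C : CantorSetup X)

/-- `ρ₀ ≤ 1` makes `r ^ t ≤ r` for all children, and `5 ρ₀ < r₀` puts the scales `5 τ`, `τ ≤ ρ₀`,
of the Frostman estimate within the range of regularity. -/
noncomputable def ρ₀ : ℝ := min 1 (C.r₀ / 6)

lemma ρ₀_pos : 0 < C.ρ₀ := lt_min one_pos (by linarith [C.r₀_pos])

lemma ρ₀_le_one : C.ρ₀ ≤ 1 := min_le_left _ _

lemma five_mul_ρ₀_lt : 5 * C.ρ₀ < C.r₀ := by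
  linarith [min_le_right 1 (C.r₀ / 6), C.r₀_pos, show C.ρ₀ = min 1 (C.r₀ / 6) from rfl]

lemma s_lt_δ : C.s < C.δ := by nlinarith [C.one_le_t, C.s_pos, C.s_mul_t_lt]

/-- Small enough that a child `n` receives at most the fraction `(r n ^ t / ρ) ^ s` of the weight
of its parent (`mass_div_sum_mass_le`). -/
noncomputable def childRadius (ρ : ℝ) : ℝ :=
  min (ρ / 4) ((C.κ / C.c₂ * ρ ^ (C.δ - C.s)) ^ (C.δ - C.s * C.t)⁻¹)

lemma childRadius_pos {ρ : ℝ} (hρ : 0 < ρ) : 0 < C.childRadius ρ :=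
  lt_min (by positivity) (Real.rpow_pos_of_pos
    (mul_pos (div_pos C.κ_pos C.c₂_pos) (Real.rpow_pos_of_pos hρ _)) _)

lemma c₂_mul_rpow_le_of_le_childRadius {ρ r : ℝ} (hρ : 0 < ρ) (hr : 0 < r)
    (h : r ≤ C.childRadius ρ) : C.c₂ * r ^ (C.δ - C.s * C.t) ≤ C.κ * ρ ^ (C.δ - C.s) := by
  have hexp : 0 < C.δ - C.s * C.t := by linarith [C.s_mul_t_lt]
  have hbase : 0 < C.κ / C.c₂ * ρ ^ (C.δ - C.s) :=
    mul_pos (div_pos C.κ_pos C.c₂_pos) (Real.rpow_pos_of_pos hρ _)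
  have hpow : r ^ (C.δ - C.s * C.t) ≤ C.κ / C.c₂ * ρ ^ (C.δ - C.s) := by
    calc r ^ (C.δ - C.s * C.t)
        ≤ ((C.κ / C.c₂ * ρ ^ (C.δ - C.s)) ^ (C.δ - C.s * C.t)⁻¹) ^ (C.δ - C.s * C.t) :=
          Real.rpow_le_rpow hr.le (h.trans (min_le_right _ _)) hexp.le
      _ = _ := by rw [← Real.rpow_mul hbase.le, inv_mul_cancel₀ hexp.ne', Real.rpow_one]
  calc C.c₂ * r ^ (C.δ - C.s * C.t) ≤ C.c₂ * (C.κ / C.c₂ * ρ ^ (C.δ - C.s)) := by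
        gcongr; exact C.c₂_pos.le
    _ = C.κ * ρ ^ (C.δ - C.s) := by field_simp [C.c₂_pos.ne']

open Classical in
noncomputable def children (y : X) (ρ : ℝ) (N : ℕ) : Finset ℕ :=
  if h : y ∈ C.S ∧ 0 < ρ ∧ ρ < C.r₀ then
    (C.exists_children h.1 h.2.1 h.2.2 (C.childRadius_pos h.2.1) N).choose
  else ∅

/-- The nodes of the tree are lists `[nₘ, …, n₁]` of ball indices, read from the current ball back
to the root `[]`. -/
def center : List ℕ → X
  | [] => C.x 0
  | n :: _ => C.x n

noncomputable def radius : List ℕ → ℝ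
  | [] => C.ρ₀
  | n :: _ => C.r n ^ C.t

def nodeBall (q : List ℕ) : Set X := closedBall (C.center q) (C.radius q)

noncomputable def nodeChildren (l : List ℕ) : Finset ℕ :=
  C.children (C.center l) (C.radius l) (l.length + 1)

def IsNode : List ℕ → Prop
  | [] => True
  | n :: l => n ∈ C.nodeChildren l ∧ IsNode l

noncomputable def descendants : ℕ → List ℕ → Finset (List ℕ)
  | 0, l => {l}
  | j + 1, l => (C.nodeChildren l).biUnion fun n => descendants j (n :: l)

noncomputable def mass (n : ℕ) : ℝ := C.μ.real (closedBall (C.x n) (C.r n))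

noncomputable def weight : List ℕ → ℝ
  | [] => 1
  | n :: l => weight l * (C.mass n / ∑ m ∈ C.nodeChildren l, C.mass m)

variable {C}

lemma center_mem (q : List ℕ) : C.center q ∈ C.S := by
  cases q <;> exact C.x_mem _

lemma radius_pos (q : List ℕ) : 0 < C.radius q := by
  cases q
  · exact C.ρ₀_pos
  · exact Real.rpow_pos_of_pos (C.r_pos _) _

lemma center_mem_nodeBall (q : List ℕ) : C.center q ∈ C.nodeBall q :=
  mem_closedBall_self (C.radius_pos q).le

lemma nodeChildren_spec {l : List ℕ} (hl : C.radius l ≤ C.ρ₀) :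
    (∀ n ∈ C.nodeChildren l, l.length + 1 ≤ n ∧ C.r n ≤ C.childRadius (C.radius l) ∧
      closedBall (C.x n) (C.r n) ⊆ C.nodeBall l) ∧
    (C.nodeChildren l : Set ℕ).PairwiseDisjoint (fun n => closedBall (C.x n) (3 * C.r n)) ∧
    C.κ * C.radius l ^ C.δ ≤ ∑ n ∈ C.nodeChildren l, C.mass n := by
  have h : C.center l ∈ C.S ∧ 0 < C.radius l ∧ C.radius l < C.r₀ :=
    ⟨C.center_mem l, C.radius_pos l, by linarith [C.five_mul_ρ₀_lt, C.ρ₀_pos]⟩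
  rw [nodeChildren, children, dif_pos h]
  exact (C.exists_children h.1 h.2.1 h.2.2 (C.childRadius_pos h.2.1) _).choose_spec

lemma r_le_radius_div_four {l : List ℕ} (hl : C.radius l ≤ C.ρ₀) {n : ℕ}
    (hn : n ∈ C.nodeChildren l) : C.r n ≤ C.radius l / 4 :=
  ((nodeChildren_spec hl).1 n hn).2.1.trans (min_le_left _ _)

lemma radius_cons_le_r {l : List ℕ} (hl : C.radius l ≤ C.ρ₀) {n : ℕ}
    (hn : n ∈ C.nodeChildren l) : C.radius (n :: l) ≤ C.r n := by
  have hr1 : C.r n ≤ 1 := by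
    linarith [r_le_radius_div_four hl hn, C.ρ₀_le_one]
  calc C.r n ^ C.t ≤ C.r n ^ (1 : ℝ) := Real.rpow_le_rpow_of_exponent_ge (C.r_pos n) hr1 C.one_le_t
    _ = C.r n := Real.rpow_one _

lemma radius_cons_le {l : List ℕ} (hl : C.radius l ≤ C.ρ₀) {n : ℕ}
    (hn : n ∈ C.nodeChildren l) : C.radius (n :: l) ≤ C.radius l / 4 :=
  (radius_cons_le_r hl hn).trans (r_le_radius_div_four hl hn)

lemma nodeBall_cons_subset {l : List ℕ} (hl : C.radius l ≤ C.ρ₀) {n : ℕ}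
    (hn : n ∈ C.nodeChildren l) : C.nodeBall (n :: l) ⊆ C.nodeBall l :=
  (closedBall_subset_closedBall (radius_cons_le_r hl hn)).trans ((nodeChildren_spec hl).1 n hn).2.2

lemma IsNode.radius_le : ∀ {q : List ℕ}, C.IsNode q → C.radius q ≤ C.ρ₀
  | [], _ => le_rfl
  | _ :: l, ⟨hn, hl⟩ => by linarith [radius_cons_le hl.radius_le hn, hl.radius_le, C.radius_pos l]

lemma isNode_nil : C.IsNode [] := trivial

lemma IsNode.cons {l : List ℕ} (hl : C.IsNode l) {n : ℕ} (hn : n ∈ C.nodeChildren l) :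
    C.IsNode (n :: l) :=
  ⟨hn, hl⟩

lemma isNode_of_mem_descendants : ∀ {j : ℕ} {l q : List ℕ}, C.IsNode l →
    q ∈ C.descendants j l → C.IsNode q
  | 0, _, _, hl, hq => (Finset.mem_singleton.1 hq) ▸ hl
  | _ + 1, _, _, hl, hq => by
    obtain ⟨n, hn, hq⟩ := Finset.mem_biUnion.1 hq
    exact isNode_of_mem_descendants (hl.cons hn) hq

lemma nodeBall_subset_of_mem_descendants : ∀ {j : ℕ} {l q : List ℕ}, C.IsNode l →
    q ∈ C.descendants j l → C.nodeBall q ⊆ C.nodeBall l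
  | 0, _, _, _, hq => (Finset.mem_singleton.1 hq) ▸ subset_rfl
  | _ + 1, _, _, hl, hq => by
    obtain ⟨n, hn, hq⟩ := Finset.mem_biUnion.1 hq
    exact (nodeBall_subset_of_mem_descendants (hl.cons hn) hq).trans
      (nodeBall_cons_subset hl.radius_le hn)

lemma radius_le_of_mem_descendants : ∀ {j : ℕ} {l q : List ℕ}, C.IsNode l →
    q ∈ C.descendants j l → C.radius q ≤ C.radius l / 4 ^ j
  | 0, _, _, _, hq => by simp [Finset.mem_singleton.1 hq]
  | j + 1, l, _, hl, hq => by
    obtain ⟨n, hn, hq⟩ := Finset.mem_biUnion.1 hq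
    calc _ ≤ C.radius (n :: l) / 4 ^ j := radius_le_of_mem_descendants (hl.cons hn) hq
      _ ≤ C.radius l / 4 / 4 ^ j := by gcongr; exact radius_cons_le hl.radius_le hn
      _ = C.radius l / 4 ^ (j + 1) := by rw [pow_succ, div_div, mul_comm]

lemma exists_append_of_mem_descendants : ∀ {j : ℕ} {l q : List ℕ},
    q ∈ C.descendants j l → ∃ p : List ℕ, p.length = j ∧ q = p ++ l
  | 0, _, _, hq => ⟨[], rfl, Finset.mem_singleton.1 hq⟩
  | _ + 1, _, _, hq => by
    obtain ⟨n, -, hq⟩ := Finset.mem_biUnion.1 hq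
    obtain ⟨p, rfl, rfl⟩ := exists_append_of_mem_descendants hq
    exact ⟨p ++ [n], by simp, by simp⟩

lemma pairwise_disjoint_descendants (j : ℕ) (l : List ℕ) :
    Pairwise fun n m => Disjoint (C.descendants j (n :: l)) (C.descendants j (m :: l)) := by
  refine fun n m hnm => Finset.disjoint_left.2 fun q hqn hqm => hnm ?_
  obtain ⟨p, hp, rfl⟩ := exists_append_of_mem_descendants hqn
  obtain ⟨p', hp', heq⟩ := exists_append_of_mem_descendants hqm
  exact List.head_eq_of_cons_eq (List.append_inj heq (hp.trans hp'.symm)).2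

lemma exists_parent_of_mem_descendants : ∀ {j : ℕ} {l q : List ℕ},
    q ∈ C.descendants (j + 1) l → ∃ p ∈ C.descendants j l, ∃ n ∈ C.nodeChildren p, q = n :: p
  | 0, l, _, hq => by
    obtain ⟨n, hn, hq⟩ := Finset.mem_biUnion.1 hq
    exact ⟨l, Finset.mem_singleton_self l, n, hn, Finset.mem_singleton.1 hq⟩
  | _ + 1, _, _, hq => by
    obtain ⟨n, hn, hq⟩ := Finset.mem_biUnion.1 hq
    obtain ⟨p, hp, m, hm, rfl⟩ := exists_parent_of_mem_descendants hq
    exact ⟨p, Finset.mem_biUnion.2 ⟨n, hn, hp⟩, m, hm, rfl⟩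

lemma sum_mass_pos {l : List ℕ} (hl : C.radius l ≤ C.ρ₀) :
    0 < ∑ n ∈ C.nodeChildren l, C.mass n :=
  (mul_pos C.κ_pos (Real.rpow_pos_of_pos (C.radius_pos l) _)).trans_le (nodeChildren_spec hl).2.2

lemma IsNode.weight_nonneg : ∀ {q : List ℕ}, C.IsNode q → 0 ≤ C.weight q
  | [], _ => zero_le_one
  | _ :: _, ⟨_, hl⟩ => mul_nonneg hl.weight_nonneg
      (div_nonneg measureReal_nonneg (sum_mass_pos hl.radius_le).le)

lemma sum_weight_cons {l : List ℕ} (hl : C.radius l ≤ C.ρ₀) :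
    ∑ n ∈ C.nodeChildren l, C.weight (n :: l) = C.weight l := by
  simp only [weight]
  rw [← Finset.mul_sum, ← Finset.sum_div, div_self (sum_mass_pos hl).ne', mul_one]

lemma sum_weight_descendants : ∀ {j : ℕ} {l : List ℕ}, C.IsNode l →
    ∑ q ∈ C.descendants j l, C.weight q = C.weight l
  | 0, _, _ => Finset.sum_singleton _ _
  | j + 1, l, hl => by
    rw [descendants, Finset.sum_biUnion ((pairwise_disjoint_descendants j l).set_pairwise _)]
    exact (Finset.sum_congr rfl fun n hn => sum_weight_descendants (hl.cons hn)).trans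
      (sum_weight_cons hl.radius_le)

lemma mass_div_sum_mass_le {l : List ℕ} (hl : C.radius l ≤ C.ρ₀) {n : ℕ}
    (hn : n ∈ C.nodeChildren l) :
    C.mass n / ∑ m ∈ C.nodeChildren l, C.mass m ≤ C.radius (n :: l) ^ C.s / C.radius l ^ C.s := by
  obtain ⟨hchild, -, hsum⟩ := nodeChildren_spec hl
  have hρ := C.radius_pos l
  have hrn := C.r_pos n
  have hr₀ : C.r n < C.r₀ := by
    linarith [r_le_radius_div_four hl hn, C.five_mul_ρ₀_lt, C.ρ₀_pos]
  have hmass : C.mass n ≤ C.κ * C.radius l ^ (C.δ - C.s) * C.r n ^ (C.t * C.s) :=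
    calc C.mass n ≤ C.c₂ * C.r n ^ C.δ := C.measureReal_closedBall_le (C.x_mem n) hrn hr₀
      _ = C.c₂ * C.r n ^ (C.δ - C.s * C.t) * C.r n ^ (C.t * C.s) := by
          rw [mul_assoc, ← Real.rpow_add hrn]; ring_nf
      _ ≤ _ := mul_le_mul_of_nonneg_right
          (C.c₂_mul_rpow_le_of_le_childRadius hρ hrn (hchild n hn).2.1) (by positivity)
  calc C.mass n / ∑ m ∈ C.nodeChildren l, C.mass m
      ≤ C.κ * C.radius l ^ (C.δ - C.s) * C.r n ^ (C.t * C.s) / (C.κ * C.radius l ^ C.δ) := by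
        gcongr
        · positivity [C.κ_pos]
        · exact mul_pos C.κ_pos (Real.rpow_pos_of_pos hρ _)
    _ = C.radius (n :: l) ^ C.s / C.radius l ^ C.s := by
        rw [radius, ← Real.rpow_mul hrn.le, Real.rpow_sub hρ]
        field_simp [C.κ_pos.ne']

lemma IsNode.weight_le : ∀ {q : List ℕ}, C.IsNode q → C.weight q ≤ C.ρ₀ ^ (-C.s) * C.radius q ^ C.s
  | [], _ => by simp [weight, radius, ← Real.rpow_add C.ρ₀_pos]
  | n :: l, ⟨hn, hl⟩ => by
    have hρ := Real.rpow_pos_of_pos (C.radius_pos l) C.s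
    calc C.weight (n :: l) ≤ C.ρ₀ ^ (-C.s) * C.radius l ^ C.s *
          (C.radius (n :: l) ^ C.s / C.radius l ^ C.s) := by
          exact mul_le_mul hl.weight_le (mass_div_sum_mass_le hl.radius_le hn)
            (div_nonneg measureReal_nonneg (sum_mass_pos hl.radius_le).le)
            (by positivity [C.ρ₀_pos])
      _ = C.ρ₀ ^ (-C.s) * C.radius (n :: l) ^ C.s := by field_simp

noncomputable def frostmanConst : ℝ := C.ρ₀ ^ (-C.s) * max 1 (C.c₂ * 5 ^ C.δ / C.κ)

lemma frostmanConst_pos : 0 < C.frostmanConst :=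
  mul_pos (Real.rpow_pos_of_pos C.ρ₀_pos _) (zero_lt_one.trans_le (le_max_left _ _))

lemma IsNode.weight_le_frostmanConst {q : List ℕ} (hq : C.IsNode q) {τ : ℝ} (hτ : C.radius q ≤ τ) :
    C.weight q ≤ C.frostmanConst * τ ^ C.s := by
  have := C.ρ₀_pos
  calc C.weight q ≤ C.ρ₀ ^ (-C.s) * C.radius q ^ C.s := hq.weight_le
    _ ≤ C.ρ₀ ^ (-C.s) * τ ^ C.s := mul_le_mul_of_nonneg_left
        (Real.rpow_le_rpow (C.radius_pos q).le hτ C.s_pos.le) (by positivity)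
    _ ≤ C.frostmanConst * τ ^ C.s := mul_le_mul_of_nonneg_right
        (le_mul_of_one_le_right (by positivity) (le_max_left _ _))
        (Real.rpow_nonneg ((C.radius_pos q).le.trans hτ) _)

lemma IsNode.weight_div_sum_mass_mul_le {l : List ℕ} (hl : C.IsNode l) {τ : ℝ} (hτ : 0 < τ)
    (hτl : τ < C.radius l) :
    C.weight l / (∑ m ∈ C.nodeChildren l, C.mass m) * (C.c₂ * (5 * τ) ^ C.δ) ≤
      C.frostmanConst * τ ^ C.s := by
  have hρ := C.radius_pos l
  have := C.κ_pos
  have := C.ρ₀_pos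
  have := C.c₂_pos
  calc C.weight l / (∑ m ∈ C.nodeChildren l, C.mass m) * (C.c₂ * (5 * τ) ^ C.δ)
      ≤ C.ρ₀ ^ (-C.s) * C.radius l ^ C.s / (C.κ * C.radius l ^ C.δ) * (C.c₂ * (5 * τ) ^ C.δ) :=
        mul_le_mul_of_nonneg_right (div_le_div₀ (by positivity) hl.weight_le (by positivity)
          (nodeChildren_spec hl.radius_le).2.2) (by positivity)
    _ = C.ρ₀ ^ (-C.s) * (C.c₂ * 5 ^ C.δ / C.κ) * (C.radius l ^ C.s * τ ^ C.δ) /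
          C.radius l ^ C.δ := by
        rw [Real.mul_rpow (by norm_num) hτ.le]; field_simp
    _ ≤ C.ρ₀ ^ (-C.s) * (C.c₂ * 5 ^ C.δ / C.κ) * (C.radius l ^ C.δ * τ ^ C.s) /
          C.radius l ^ C.δ :=
        div_le_div_of_nonneg_right (mul_le_mul_of_nonneg_left
          (Real.rpow_mul_rpow_le_rpow_mul_rpow hτ hτl.le C.s_lt_δ.le) (by positivity))
          (by positivity)
    _ = C.ρ₀ ^ (-C.s) * (C.c₂ * 5 ^ C.δ / C.κ) * τ ^ C.s := by field_simp
    _ ≤ C.frostmanConst * τ ^ C.s := by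
        rw [frostmanConst]
        gcongr
        exact le_max_right _ _

lemma IsNode.sum_filter_weight_descendants_le {l : List ℕ} (hl : C.IsNode l) (j : ℕ)
    (p : List ℕ → Prop) [DecidablePred p] :
    ∑ q ∈ C.descendants j l with p q, C.weight q ≤ C.weight l :=
  (Finset.sum_le_sum_of_subset_of_nonneg (Finset.filter_subset _ _) fun _ hq _ =>
    (isNode_of_mem_descendants hl hq).weight_nonneg).trans_eq (sum_weight_descendants hl)

open Classical in
lemma IsNode.sum_filter_descendants_succ {l : List ℕ} (hl : C.IsNode l) (z : X) (τ : ℝ) (j : ℕ) :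
    ∑ q ∈ C.descendants (j + 1) l with C.center q ∈ closedBall z τ, C.weight q =
      ∑ n ∈ C.nodeChildren l with (closedBall (C.x n) (C.r n) ∩ closedBall z τ).Nonempty,
        ∑ q ∈ C.descendants j (n :: l) with C.center q ∈ closedBall z τ, C.weight q := by
  rw [descendants, Finset.filter_biUnion, Finset.sum_biUnion fun n _ m _ hnm =>
    Finset.disjoint_filter_filter (pairwise_disjoint_descendants j l hnm)]
  refine (Finset.sum_subset (Finset.filter_subset _ _) fun n hn hnM =>
    Finset.sum_eq_zero fun q hq => absurd ?_ hnM).symm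
  obtain ⟨hq, hqz⟩ := Finset.mem_filter.1 hq
  refine Finset.mem_filter.2 ⟨hn, C.center q, ?_, hqz⟩
  exact closedBall_subset_closedBall (radius_cons_le_r hl.radius_le hn)
    (nodeBall_subset_of_mem_descendants (hl.cons hn) hq (center_mem_nodeBall q))

section Frostman

variable [OpensMeasurableSpace X]

lemma IsNode.sum_weight_cons_le_of_one_lt_card {l : List ℕ} (hl : C.IsNode l) {z : X} {τ : ℝ}
    (hτ : 0 < τ) (hτρ₀ : τ ≤ C.ρ₀) (hτl : τ < C.radius l) {M : Finset ℕ}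
    (hMc : M ⊆ C.nodeChildren l) (hM : 1 < M.card)
    (hmeet : ∀ n ∈ M, (closedBall (C.x n) (C.r n) ∩ closedBall z τ).Nonempty) :
    ∑ n ∈ M, C.weight (n :: l) ≤ C.frostmanConst * τ ^ C.s :=
  calc ∑ n ∈ M, C.weight (n :: l)
      = C.weight l / (∑ m ∈ C.nodeChildren l, C.mass m) * ∑ n ∈ M, C.mass n := by
        simp only [weight, Finset.mul_sum]
        exact Finset.sum_congr rfl fun n _ => by ring
    _ ≤ C.weight l / (∑ m ∈ C.nodeChildren l, C.mass m) * (C.c₂ * (5 * τ) ^ C.δ) :=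
        mul_le_mul_of_nonneg_left
          (C.sum_measureReal_le_of_nonempty_inter hM
            ((nodeChildren_spec hl.radius_le).2.1.subset hMc) hτ
            (by linarith [C.five_mul_ρ₀_lt]) hmeet)
          (div_nonneg hl.weight_nonneg (sum_mass_pos hl.radius_le).le)
    _ ≤ C.frostmanConst * τ ^ C.s := hl.weight_div_sum_mass_mul_le hτ hτl

open Classical in
/-- If two children of a node `l` with `τ < radius l` meet the ball, the separation of the children
forces their radii below `τ` and the regularity of `μ` bounds their mass; otherwise we descend into
the only child meeting it. -/
lemma IsNode.sum_weight_descendants_le {z : X} {τ : ℝ} (hτ : 0 < τ) (hτρ₀ : τ ≤ C.ρ₀) (j : ℕ) :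
    ∀ {l : List ℕ}, C.IsNode l → (∀ q ∈ C.descendants j l, C.radius q ≤ τ) →
    ∑ q ∈ C.descendants j l with C.center q ∈ closedBall z τ, C.weight q ≤
      C.frostmanConst * τ ^ C.s := by
  induction j with
  | zero =>
    intro l hl hsmall
    exact (hl.sum_filter_weight_descendants_le 0 _).trans
      (hl.weight_le_frostmanConst (hsmall l (Finset.mem_singleton_self l)))
  | succ j ih =>
    intro l hl hsmall
    by_cases hlτ : C.radius l ≤ τ
    · exact (hl.sum_filter_weight_descendants_le _ _).trans (hl.weight_le_frostmanConst hlτ)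
    rw [hl.sum_filter_descendants_succ]
    set M := {n ∈ C.nodeChildren l | (closedBall (C.x n) (C.r n) ∩ closedBall z τ).Nonempty}
    have hMc : M ⊆ C.nodeChildren l := Finset.filter_subset _ _
    rcases le_or_gt M.card 1 with hM | hM
    · rcases M.eq_empty_or_nonempty with hM0 | ⟨n, hn⟩
      · rw [hM0, Finset.sum_empty]
        exact mul_nonneg C.frostmanConst_pos.le (Real.rpow_nonneg hτ.le _)
      rw [Finset.eq_singleton_iff_unique_mem.2 ⟨hn, fun m hm => Finset.card_le_one.1 hM m hm n hn⟩,
        Finset.sum_singleton]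
      exact ih (hl.cons (hMc hn)) fun q hq => hsmall q (Finset.mem_biUnion.2 ⟨n, hMc hn, hq⟩)
    · refine (Finset.sum_le_sum fun n hn => (hl.cons (hMc hn)).sum_filter_weight_descendants_le
        j _).trans ?_
      exact hl.sum_weight_cons_le_of_one_lt_card hτ hτρ₀ (not_le.1 hlτ) hMc hM
        fun n hn => (Finset.mem_filter.1 hn).2

open Classical in
lemma eventually_sum_weight_le {z : X} {τ : ℝ} (hτ : 0 < τ) (hτρ₀ : τ ≤ C.ρ₀) :
    ∀ᶠ m in atTop, ∑ q ∈ C.descendants m [] with C.center q ∈ closedBall z τ, C.weight q ≤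
      C.frostmanConst * τ ^ C.s := by
  have hlim : Tendsto (fun m : ℕ => C.ρ₀ / 4 ^ m) atTop (𝓝 0) :=
    tendsto_const_nhds.div_atTop (tendsto_pow_atTop_atTop_of_one_lt (by norm_num))
  filter_upwards [hlim.eventually (ge_mem_nhds hτ)] with m hm
  exact isNode_nil.sum_weight_descendants_le hτ hτρ₀ m fun q hq =>
    (radius_le_of_mem_descendants isNode_nil hq).trans hm

end Frostman

variable (C)

def level (m : ℕ) : Set X := ⋃ q ∈ C.descendants m [], C.nodeBall q

lemma level_antitone : Antitone C.level :=
  antitone_nat_of_succ_le fun _ => iUnion₂_subset fun _ hq => by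
    obtain ⟨p, hp, n, hn, rfl⟩ := exists_parent_of_mem_descendants hq
    exact (nodeBall_cons_subset (isNode_of_mem_descendants isNode_nil hp).radius_le hn).trans
      (subset_biUnion_of_mem (u := C.nodeBall) hp)

lemma isCompact_level [ProperSpace X] (m : ℕ) : IsCompact (C.level m) :=
  (C.descendants m []).isCompact_biUnion fun _ _ => isCompact_closedBall _ _

lemma iInter_level_subset_limsupSet :
    ⋂ m, C.level m ⊆ limsupSet fun n => closedBall (C.x n) (C.r n ^ C.t) := by
  refine fun y hy => mem_limsupSet.2 fun N => ?_
  obtain ⟨q, hq, hyq⟩ := mem_iUnion₂.1 (mem_iInter.1 hy (N + 1))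
  obtain ⟨p, hp, n, hn, rfl⟩ := exists_parent_of_mem_descendants hq
  obtain ⟨p', hp', rfl⟩ := exists_append_of_mem_descendants hp
  have hNn := ((nodeChildren_spec (isNode_of_mem_descendants isNode_nil hp).radius_le).1 n hn).1
  exact ⟨n, by simp only [List.length_append, hp'] at hNn; omega, hyq⟩

lemma isDiscreteFrostman [OpensMeasurableSpace X] :
    IsDiscreteFrostman C.level (C.descendants · []) C.center C.weight C.s C.frostmanConst C.ρ₀ where
  antitone := C.level_antitone
  mem _ q hq := subset_biUnion_of_mem (u := C.nodeBall) hq (center_mem_nodeBall q)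
  nonneg _ _ hq := (isNode_of_mem_descendants isNode_nil hq).weight_nonneg
  sum_eq_one _ := sum_weight_descendants isNode_nil
  eventually_sum_le _ _ hτ hτρ₀ := C.eventually_sum_weight_le hτ hτρ₀

theorem le_dimH_limsupSet [ProperSpace X] [BorelSpace X] :
    ENNReal.ofReal C.s ≤ dimH (limsupSet fun n => closedBall (C.x n) (C.r n ^ C.t)) := by
  have hH : μH[C.s] (⋂ m, C.level m) ≠ 0 :=
    C.isDiscreteFrostman.hausdorffMeasure_iInter_ne_zero C.isCompact_level C.frostmanConst_pos
      C.s_pos C.ρ₀_pos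
  calc ENNReal.ofReal C.s = (C.s.toNNReal : ℝ≥0∞) := rfl
    _ ≤ dimH (⋂ m, C.level m) :=
      le_dimH_of_hausdorffMeasure_ne_zero (by rwa [Real.coe_toNNReal _ C.s_pos.le])
    _ ≤ _ := dimH_mono C.iInter_level_subset_limsupSet

end CantorSetup

theorem stmt5_general (k : ℕ) (S : Set (Fin k → ℝ)) (δ : ℝ)
    (μ : Measure (Fin k → ℝ)) [IsProbabilityMeasure μ]
    (hreg : ∃ c₁ c₂ r₀ : ℝ, 0 < c₁ ∧ 0 < c₂ ∧ 0 < r₀ ∧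
      ∀ x ∈ S, ∀ r : ℝ, 0 < r → r < r₀ →
        ENNReal.ofReal (c₁ * r ^ δ) ≤ μ (Metric.closedBall x r) ∧
          μ (Metric.closedBall x r) ≤ ENNReal.ofReal (c₂ * r ^ δ))
    (x : ℕ → (Fin k → ℝ)) (hx : ∀ n, x n ∈ S) (r : ℕ → ℝ) (hr : ∀ n, 0 < r n)
    (hr0 : Filter.Tendsto r Filter.atTop (nhds 0))
    (hfull : μ (limsupSet fun n => Metric.closedBall (x n) (r n)) = 1) :
    ∀ t : ℝ, 1 ≤ t →
      ENNReal.ofReal (δ / t) ≤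
        dimH (limsupSet fun n => Metric.closedBall (x n) (r n ^ t)) := by
  intro t ht
  obtain ⟨c₁, c₂, r₀, hc₁, hc₂, hr₀, hreg⟩ := hreg
  by_contra! hlt
  obtain ⟨s, -, hs_lt, hs_δt⟩ := ENNReal.lt_iff_exists_real_btwn.1 hlt
  have hs : 0 < s := ENNReal.ofReal_pos.1 (zero_le.trans_lt hs_lt)
  have hst : s * t < δ := (lt_div_iff₀ (by linarith)).1 (ENNReal.ofReal_lt_ofReal_iff'.1 hs_δt).1
  have hnull : μ (limsupSet fun n => closedBall (x n) (r n))ᶜ = 0 :=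
    (prob_compl_eq_zero_iff (.limsupSet fun _ => measurableSet_closedBall)).2 hfull
  let C : CantorSetup (Fin k → ℝ) :=
    { μ, S, δ, c₁, c₂, r₀, x, r, t, s
      c₁_pos := hc₁, c₂_pos := hc₂, r₀_pos := hr₀, regular := hreg, x_mem := hx, r_pos := hr
      tendsto_r := hr0, ae_mem_limsup := ae_iff.2 hnull
      one_le_t := ht, s_pos := hs, s_mul_t_lt := hst }
  exact C.le_dimH_limsupSet.not_gt hs_lt

/-- Jaffard's theorem: dimension part. -/
theorem stmt5 (k : ℕ) (S : Set (Fin k → ℝ)) (δ : ℝ) (hδ : 0 < δ)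
    (μ : Measure (Fin k → ℝ)) [IsProbabilityMeasure μ] (hsupp : μ Sᶜ = 0)
    (hreg : ∃ c₁ c₂ r₀ : ℝ, 0 < c₁ ∧ 0 < c₂ ∧ 0 < r₀ ∧
      ∀ x ∈ S, ∀ r : ℝ, 0 < r → r < r₀ →
        ENNReal.ofReal (c₁ * r ^ δ) ≤ μ (Metric.closedBall x r) ∧
          μ (Metric.closedBall x r) ≤ ENNReal.ofReal (c₂ * r ^ δ))
    (x : ℕ → (Fin k → ℝ)) (hx : ∀ n, x n ∈ S) (r : ℕ → ℝ) (hr : ∀ n, 0 < r n)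
    (hr0 : Filter.Tendsto r Filter.atTop (nhds 0))
    (hfull : μ (limsupSet fun n => Metric.closedBall (x n) (r n)) = 1) :
    ∀ t : ℝ, 1 ≤ t →
      ENNReal.ofReal (δ / t) ≤
        dimH (limsupSet fun n => Metric.closedBall (x n) (r n ^ t)) :=
  stmt5_general k S δ μ hreg x hx r hr hr0 hfull
end

section
/- Let Φ = {φ_i}_{i=1}^n be a self-similar iterated function system on ℝ^k satisfying the open set condition, with contraction ratios r_1, …, r_n, and let X be the associated self-similar set. Then dim_H(X) = s, where s is the unique real number satisfying ∑_{i=1}^n r_i^s = 1. -/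
open Set MeasureTheory Metric Filter Topology ENNReal NNReal

/-!
The upper bound needs no separation: `X` is covered by the pieces `φ_w(X)`, `|w| = m`, of
diameter `r_w diam X`, and `∑_{|w| = m} r_w ^ s = (∑ r_i ^ s) ^ m = 1`, so
`μH[s] X ≤ (diam X) ^ s`.

For the lower bound, push the Bernoulli measure with weights `r_i ^ s` on the code space
`ℕ → ι` forward along the coding map. Every code has a prefix `w` in the cut set
`r_w ≤ ρ < r_{w'}` (`w'` is `w` without its last letter), and the cylinder of `w` has mass
`r_w ^ s ≤ ρ ^ s`; so a ball of radius `ρ` has mass at most `ρ ^ s` times the number of cut-set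
words whose piece `φ_w(X)` meets it. By the open set condition the sets `φ_w(U)` for these words
are disjoint, have volume `≳ ρ ^ k` and lie in a ball of radius `≍ ρ`, so there are boundedly
many of them. Hence balls have mass `≲ ρ ^ s`, and the mass distribution principle gives
`μH[s] X > 0`.
-/

theorem MeasureTheory.OuterMeasure.le_mul_hausdorffMeasure_of_closedBall_le {X : Type*}
    [MetricSpace X] [MeasurableSpace X] [BorelSpace X] (μ : OuterMeasure X) {s δ : ℝ}
    {C : ℝ≥0∞} (hC : C ≠ ∞) (hC0 : C ≠ 0) (hδ : 0 < δ)
    (hball : ∀ x ρ, 0 < ρ → ρ < δ → μ (closedBall x ρ) ≤ C * ENNReal.ofReal ρ ^ s)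
    (A : Set X) : μ A ≤ C * μH[s] A := by
  have hset : ∀ t : Set X, ediam t ≤ ENNReal.ofReal (δ / 2) → μ t ≤ C * ediam t ^ s := by
    intro t ht
    rcases t.eq_empty_or_nonempty with rfl | ⟨a, ha⟩
    · simp
    have hbdd : ediam t ≠ ∞ := ne_top_of_le_ne_top ofReal_ne_top ht
    have hlt : diam t < δ := by
      have := ENNReal.toReal_mono ofReal_ne_top ht
      rw [toReal_ofReal (by positivity)] at this
      exact this.trans_lt (half_lt_self hδ)
    -- The hypothesis only sees positive radii: use the balls of radius `ρ ∈ (diam t, δ)`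
    -- about `a ∈ t` and let `ρ ↓ diam t`.
    have hle : ∀ ρ ∈ Ioo (diam t) δ, μ t ≤ C * ENNReal.ofReal ρ ^ s := fun ρ hρ =>
      (μ.mono fun y hy => (dist_le_diam_of_mem (isBounded_iff_ediam_ne_top.2 hbdd) hy ha).trans
        hρ.1.le).trans (hball a ρ (diam_nonneg.trans_lt hρ.1) hρ.2)
    have hcont : Continuous fun ρ : ℝ => C * ENNReal.ofReal ρ ^ s :=
      (ENNReal.continuous_const_mul hC).comp
        (ENNReal.continuous_rpow_const.comp ENNReal.continuous_ofReal)
    have hlim := (hcont.tendsto (diam t)).mono_left (nhdsWithin_le_nhds (s := Ioi (diam t)))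
    rw [diam, ofReal_toReal hbdd] at hlim
    exact ge_of_tendsto hlim (eventually_of_mem (Ioo_mem_nhdsGT hlt) hle)
  have hμ : μ ≤ C • (μH[s] : Measure X).toOuterMeasure := by
    rw [Measure.hausdorffMeasure, Measure.mkMetric_toOuterMeasure,
      ← OuterMeasure.mkMetric_smul _ hC hC0]
    exact OuterMeasure.le_mkMetric _ μ _ (ofReal_pos.2 (half_pos hδ)) hset
  exact hμ A

lemma MeasureTheory.Measure.infinitePi_setOf_take_eq {α : Type*} [MeasurableSpace α]
    [MeasurableSingletonClass α] (P : Measure α) [IsProbabilityMeasure P] (w : List α) :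
    infinitePi (fun _ : ℕ => P) {ω | Stream'.take w.length ω = w} =
      (w.map fun a => P {a}).prod := by
  have hset : {ω : ℕ → α | Stream'.take w.length ω = w} =
      Set.pi (Finset.range w.length) fun j => {a | w[j]? = some a} := by
    ext ω
    -- `ℕ → α` is `Stream' α` only after unfolding, so `Stream'` lemmas get `ω` explicitly.
    simp only [mem_ofPred_eq, Set.mem_pi, Finset.coe_range, mem_Iio]
    constructor
    · rintro h j hj
      rw [← h, Stream'.getElem?_take (s := ω) hj]
      rfl
    · intro h
      refine List.ext_getElem? fun j => ?_
      by_cases hj : j < w.length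
      · rw [Stream'.getElem?_take (s := ω) hj, h j hj]
        rfl
      · rw [List.getElem?_eq_none (by rw [Stream'.length_take _ ω]; omega),
          List.getElem?_eq_none (by omega)]
  have hmeas (j : ℕ) : MeasurableSet {a | w[j]? = some a} :=
    Set.Subsingleton.measurableSet fun a ha b hb => Option.some_injective _ (ha.symm.trans hb)
  rw [hset, infinitePi_pi (μ := fun _ : ℕ => P) fun j _ => hmeas j, Finset.prod_range,
    ← Fin.prod_univ_fun_getElem]
  refine Finset.prod_congr rfl fun j _ => ?_
  simp [eq_comm]

lemma ofReal_pow_mul_volume_le_volume_image {κ : Type*} [Fintype κ]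
    {f : (κ → ℝ) → κ → ℝ} {c : ℝ} (hc : 0 < c) (hf : ∀ x y, dist (f x) (f y) = c * dist x y)
    (A : Set (κ → ℝ)) : ENNReal.ofReal (c ^ Fintype.card κ) * volume A ≤ volume (f '' A) := by
  have hanti : AntilipschitzWith c⁻¹.toNNReal f := .of_le_mul_dist fun x y => by
    rw [hf, Real.coe_toNNReal _ (inv_nonneg.2 hc.le), inv_mul_cancel_left₀ hc.ne']
  have h := hanti.le_hausdorffMeasure_image (d := Fintype.card κ) (Nat.cast_nonneg _) A
  rw [hausdorffMeasure_pi_real, ENNReal.rpow_natCast] at h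
  change volume A ≤ ENNReal.ofReal c⁻¹ ^ Fintype.card κ * volume (f '' A) at h
  calc ENNReal.ofReal (c ^ Fintype.card κ) * volume A
      ≤ ENNReal.ofReal (c ^ Fintype.card κ) * (ENNReal.ofReal c⁻¹ ^ Fintype.card κ *
        volume (f '' A)) := by gcongr
    _ = volume (f '' A) := by
      rw [← mul_assoc, ← ENNReal.ofReal_pow (inv_nonneg.2 hc.le),
        ← ENNReal.ofReal_mul (by positivity), ← mul_pow, mul_inv_cancel₀ hc.ne', one_pow,
        ENNReal.ofReal_one, one_mul]

structure SimilarityIFS (ι E : Type*) [PseudoMetricSpace E] where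
  map : ι → E → E
  ratio : ι → ℝ
  ratio_pos : ∀ i, 0 < ratio i
  ratio_lt_one : ∀ i, ratio i < 1
  dist_map : ∀ i x y, dist (map i x) (map i y) = ratio i * dist x y

namespace SimilarityIFS

variable {ι E : Type*}

section Words

variable [PseudoMetricSpace E] (S : SimilarityIFS ι E)

def wordMap : List ι → E → E
  | [] => id
  | i :: w => S.map i ∘ wordMap w

def wordRatio (w : List ι) : ℝ := (w.map S.ratio).prod

@[simp] lemma wordMap_nil : S.wordMap [] = id := rfl

@[simp] lemma wordMap_cons (i : ι) (w : List ι) : S.wordMap (i :: w) = S.map i ∘ S.wordMap w :=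
  rfl

lemma wordMap_append (w v : List ι) : S.wordMap (w ++ v) = S.wordMap w ∘ S.wordMap v := by
  induction w with
  | nil => rfl
  | cons i w ih => simp [ih, Function.comp_assoc]

@[simp] lemma wordRatio_nil : S.wordRatio [] = 1 := rfl

@[simp] lemma wordRatio_cons (i : ι) (w : List ι) :
    S.wordRatio (i :: w) = S.ratio i * S.wordRatio w := by
  simp [wordRatio]

lemma wordRatio_append (w v : List ι) : S.wordRatio (w ++ v) = S.wordRatio w * S.wordRatio v := by
  simp [wordRatio]

lemma wordRatio_pos (w : List ι) : 0 < S.wordRatio w := by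
  induction w with
  | nil => simp
  | cons i w ih => simpa using mul_pos (S.ratio_pos i) ih

lemma wordRatio_le_one (w : List ι) : S.wordRatio w ≤ 1 := by
  induction w with
  | nil => simp
  | cons i w ih =>
    simpa using mul_le_one₀ (S.ratio_lt_one i).le (S.wordRatio_pos w).le ih

lemma wordRatio_le_of_prefix {w v : List ι} (h : w <+: v) : S.wordRatio v ≤ S.wordRatio w := by
  obtain ⟨u, rfl⟩ := h
  rw [wordRatio_append]
  exact mul_le_of_le_one_right (S.wordRatio_pos w).le (S.wordRatio_le_one u)

lemma wordRatio_le_pow {R : ℝ} (hR : ∀ i, S.ratio i ≤ R) (w : List ι) :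
    S.wordRatio w ≤ R ^ w.length := by
  induction w with
  | nil => simp
  | cons i w ih =>
    rw [wordRatio_cons, List.length_cons, pow_succ']
    exact mul_le_mul (hR i) ih (S.wordRatio_pos w).le ((S.ratio_pos i).le.trans (hR i))

lemma exists_ratio_le [Finite ι] : ∃ R ∈ Ico (0 : ℝ) 1, ∀ i, S.ratio i ≤ R := by
  cases isEmpty_or_nonempty ι
  · exact ⟨0, ⟨le_rfl, zero_lt_one⟩, isEmptyElim⟩
  · obtain ⟨j, hj⟩ := Finite.exists_max S.ratio
    exact ⟨S.ratio j, ⟨(S.ratio_pos j).le, S.ratio_lt_one j⟩, hj⟩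

lemma exists_le_ratio [Finite ι] : ∃ c > 0, ∀ i, c ≤ S.ratio i := by
  cases isEmpty_or_nonempty ι
  · exact ⟨1, one_pos, isEmptyElim⟩
  · obtain ⟨j, hj⟩ := Finite.exists_min S.ratio
    exact ⟨S.ratio j, S.ratio_pos j, hj⟩

lemma dist_wordMap (w : List ι) (x y : E) :
    dist (S.wordMap w x) (S.wordMap w y) = S.wordRatio w * dist x y := by
  induction w with
  | nil => simp
  | cons i w ih => simp [S.dist_map, ih, mul_assoc]

lemma lipschitzWith_wordMap (w : List ι) :
    LipschitzWith (S.wordRatio w).toNNReal (S.wordMap w) :=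
  .of_dist_le_mul fun x y => by
    rw [S.dist_wordMap, Real.coe_toNNReal _ (S.wordRatio_pos w).le]

lemma antilipschitzWith_wordMap (w : List ι) :
    AntilipschitzWith (S.wordRatio w)⁻¹.toNNReal (S.wordMap w) :=
  .of_le_mul_dist fun x y => by
    rw [S.dist_wordMap, Real.coe_toNNReal _ (inv_nonneg.2 (S.wordRatio_pos w).le),
      inv_mul_cancel_left₀ (S.wordRatio_pos w).ne']

lemma mapsTo_wordMap {A : Set E} (hA : ∀ i, MapsTo (S.map i) A A) (w : List ι) :
    MapsTo (S.wordMap w) A A := by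
  induction w with
  | nil => exact mapsTo_id A
  | cons i w ih => exact (hA i).comp ih

lemma nonneg_of_sum_rpow_eq_one [Fintype ι] {s : ℝ} (hs : ∑ i, S.ratio i ^ s = 1) : 0 ≤ s := by
  by_contra! hneg
  obtain ⟨i⟩ : Nonempty ι := by
    by_contra! hι
    simp at hs
  have hi : 1 < S.ratio i ^ s :=
    Real.one_lt_rpow_of_pos_of_lt_one_of_neg (S.ratio_pos i) (S.ratio_lt_one i) hneg
  have hsingle := Finset.single_le_sum (fun j _ => (Real.rpow_pos_of_pos (S.ratio_pos j) s).le)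
    (Finset.mem_univ i)
  linarith

lemma sum_wordRatio_ofFn_rpow [Fintype ι] {s : ℝ} (hs : ∑ i, S.ratio i ^ s = 1) (m : ℕ) :
    ∑ v : Fin m → ι, S.wordRatio (List.ofFn v) ^ s = 1 := by
  have hprod (v : Fin m → ι) : S.wordRatio (List.ofFn v) ^ s = ∏ j, S.ratio (v j) ^ s := by
    rw [wordRatio, List.map_ofFn, List.prod_ofFn,
      Real.finsetProd_rpow _ _ fun j _ => (S.ratio_pos (v j)).le]
    rfl
  simp_rw [hprod]
  rw [← Fintype.sum_pow (fun i => S.ratio i ^ s), hs, one_pow]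

def cutSet (ρ : ℝ) : Set (List ι) := {w | S.wordRatio w ≤ ρ ∧ ρ < S.wordRatio w.dropLast}

lemma ne_nil_of_mem_cutSet {ρ : ℝ} {w : List ι} (hw : w ∈ S.cutSet ρ) : w ≠ [] := by
  rintro rfl
  exact (hw.1.trans_lt hw.2).false

lemma mul_lt_wordRatio_of_mem_cutSet {c ρ : ℝ} (hc : ∀ i, c ≤ S.ratio i) {w : List ι}
    (hw : w ∈ S.cutSet ρ) : c * ρ < S.wordRatio w := by
  have hρ : 0 < ρ := (S.wordRatio_pos w).trans_le hw.1
  have hsplit : S.wordRatio w = S.ratio (w.getLast (S.ne_nil_of_mem_cutSet hw)) *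
      S.wordRatio w.dropLast := by
    conv_lhs => rw [← List.dropLast_append_getLast (S.ne_nil_of_mem_cutSet hw)]
    simp [wordRatio_append, mul_comm]
  rw [hsplit]
  calc c * ρ ≤ S.ratio (w.getLast _) * ρ := by gcongr; exact hc _
    _ < _ := mul_lt_mul_of_pos_left hw.2 (S.ratio_pos _)

lemma isAntichain_cutSet (ρ : ℝ) : IsAntichain (· <+: ·) (S.cutSet ρ) := by
  intro w hw v hv hne hpre
  have hlt : w.length < v.length :=
    lt_of_le_of_ne hpre.length_le fun h => hne (hpre.eq_of_length h)
  have hpre' : w <+: v.dropLast := by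
    rw [List.dropLast_eq_take, List.prefix_take_iff]
    exact ⟨hpre, by omega⟩
  exact ((S.wordRatio_le_of_prefix hpre').trans hw.1).not_gt hv.2

lemma finite_cutSet [Finite ι] {ρ : ℝ} (hρ : 0 < ρ) : (S.cutSet ρ).Finite := by
  obtain ⟨c, hc0, hc⟩ := S.exists_le_ratio
  obtain ⟨R, ⟨hR0, hR1⟩, hR⟩ := S.exists_ratio_le
  obtain ⟨M, hM⟩ := exists_pow_lt_of_lt_one (mul_pos hc0 hρ) hR1
  refine (List.finite_length_le ι M).subset fun w hw =>
    show w.length ≤ M from not_lt.1 fun hlen => ?_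
  have hpow : R ^ w.length ≤ R ^ M := pow_le_pow_of_le_one hR0 hR1.le hlen.le
  linarith [S.mul_lt_wordRatio_of_mem_cutSet hc hw, S.wordRatio_le_pow hR w]

lemma exists_take_mem_cutSet [Finite ι] {ρ : ℝ} (hρ0 : 0 < ρ) (hρ1 : ρ < 1) (ω : ℕ → ι) :
    ∃ m, Stream'.take m ω ∈ S.cutSet ρ := by
  obtain ⟨R, ⟨hR0, hR1⟩, hR⟩ := S.exists_ratio_le
  have hex : ∃ m, S.wordRatio (Stream'.take m ω) ≤ ρ := by
    obtain ⟨m, hm⟩ := exists_pow_lt_of_lt_one hρ0 hR1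
    refine ⟨m, (S.wordRatio_le_pow hR _).trans ?_⟩
    rw [Stream'.length_take m ω]
    exact hm.le
  have hpos : Nat.find hex ≠ 0 := fun h => by
    have := Nat.find_spec hex
    rw [h, Stream'.take_zero ω, wordRatio_nil] at this
    linarith
  refine ⟨Nat.find hex, Nat.find_spec hex, ?_⟩
  rw [Stream'.dropLast_take (xs := ω)]
  exact not_le.1 (Nat.find_min hex (by omega))

end Words

section Attractor

variable [MetricSpace E] (S : SimilarityIFS ι E) {X : Set E}

lemma mapsTo_of_eq_iUnion (hX : X = ⋃ i, S.map i '' X) (i : ι) : MapsTo (S.map i) X X :=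
  fun x hx => by rw [hX]; exact mem_iUnion_of_mem i (mem_image_of_mem _ hx)

lemma subset_iUnion_wordMap_image (hX : X = ⋃ i, S.map i '' X) (m : ℕ) :
    X ⊆ ⋃ v : Fin m → ι, S.wordMap (List.ofFn v) '' X := by
  induction m with
  | zero => exact fun x hx => mem_iUnion.2 ⟨Fin.elim0, x, hx, rfl⟩
  | succ m ih =>
    intro x hx
    rw [hX] at hx
    obtain ⟨i, y, hy, rfl⟩ := mem_iUnion.1 hx
    obtain ⟨v, z, hz, rfl⟩ := mem_iUnion.1 (ih hy)
    exact mem_iUnion.2 ⟨Fin.cons i v, z, hz, by simp [List.ofFn_succ]⟩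

lemma ediam_wordMap_image_le (w : List ι) (A : Set E) :
    ediam (S.wordMap w '' A) ≤ ENNReal.ofReal (S.wordRatio w) * ediam A :=
  (S.lipschitzWith_wordMap w).ediam_image_le A

theorem hausdorffMeasure_le_ediam_rpow [Fintype ι] [MeasurableSpace E] [BorelSpace E]
    (hX : X = ⋃ i, S.map i '' X) (hXb : Bornology.IsBounded X) {s : ℝ}
    (hs : ∑ i, S.ratio i ^ s = 1) :
    μH[s] X ≤ ediam X ^ s := by
  have hs0 := S.nonneg_of_sum_rpow_eq_one hs
  obtain ⟨R, ⟨hR0, hR1⟩, hR⟩ := S.exists_ratio_le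
  have hdiam (m : ℕ) (v : Fin m → ι) :
      ediam (S.wordMap (List.ofFn v) '' X) ≤ ENNReal.ofReal (R ^ m) * ediam X :=
    calc _ ≤ ENNReal.ofReal (S.wordRatio (List.ofFn v)) * ediam X :=
          S.ediam_wordMap_image_le _ X
      _ ≤ _ := by gcongr; simpa using S.wordRatio_le_pow hR (List.ofFn v)
  have hlim : Tendsto (fun m : ℕ => ENNReal.ofReal (R ^ m) * ediam X) atTop (𝓝 0) := by
    simpa using ENNReal.Tendsto.mul_const (ENNReal.tendsto_ofReal
      (tendsto_pow_atTop_nhds_zero_of_lt_one hR0 hR1)) (Or.inr hXb.ediam_ne_top)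
  have hsum (m : ℕ) : ∑ v : Fin m → ι, ediam (S.wordMap (List.ofFn v) '' X) ^ s ≤ ediam X ^ s :=
    calc ∑ v : Fin m → ι, ediam (S.wordMap (List.ofFn v) '' X) ^ s
        ≤ ∑ v : Fin m → ι, (ENNReal.ofReal (S.wordRatio (List.ofFn v)) * ediam X) ^ s := by
          gcongr with v
          exact S.ediam_wordMap_image_le _ X
      _ = ENNReal.ofReal (∑ v : Fin m → ι, S.wordRatio (List.ofFn v) ^ s) * ediam X ^ s := by
          rw [ENNReal.ofReal_sum_of_nonneg fun v _ => (Real.rpow_pos_of_pos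
            (S.wordRatio_pos _) s).le, Finset.sum_mul]
          refine Finset.sum_congr rfl fun v _ => ?_
          rw [ENNReal.mul_rpow_of_nonneg _ _ hs0,
            ENNReal.ofReal_rpow_of_nonneg (S.wordRatio_pos _).le hs0]
      _ = ediam X ^ s := by rw [S.sum_wordRatio_ofFn_rpow hs, ENNReal.ofReal_one, one_mul]
  calc μH[s] X ≤ liminf (fun m : ℕ => ∑ v : Fin m → ι, ediam (S.wordMap (List.ofFn v) '' X) ^ s)
        atTop :=
        Measure.hausdorffMeasure_le_liminf_sum s X _ hlim _ (.of_forall hdiam)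
          (.of_forall (S.subset_iUnion_wordMap_image hX))
    _ ≤ ediam X ^ s := (liminf_le_liminf (.of_forall hsum)).trans (liminf_const _).le

theorem dimH_le_of_sum_rpow_eq_one [Fintype ι] [MeasurableSpace E] [BorelSpace E]
    (hX : X = ⋃ i, S.map i '' X) (hXb : Bornology.IsBounded X) {s : ℝ}
    (hs : ∑ i, S.ratio i ^ s = 1) :
    dimH X ≤ ENNReal.ofReal s := by
  refine dimH_le_of_hausdorffMeasure_ne_top (d := s.toNNReal) ?_
  rw [Real.coe_toNNReal _ (S.nonneg_of_sum_rpow_eq_one hs)]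
  exact ((S.hausdorffMeasure_le_ediam_rpow hX hXb hs).trans_lt
    (ENNReal.rpow_lt_top_of_nonneg (S.nonneg_of_sum_rpow_eq_one hs) hXb.ediam_ne_top)).ne

end Attractor

section CodeMeasure

variable [PseudoMetricSpace E] [Fintype ι] [MeasurableSpace ι] [MeasurableSingletonClass ι]
  (S : SimilarityIFS ι E) {s : ℝ}

noncomputable def codeMeasure (hs : ∑ i, S.ratio i ^ s = 1) : Measure (ℕ → ι) :=
  Measure.infinitePi fun _ => (PMF.ofFintype (fun i => ENNReal.ofReal (S.ratio i ^ s)) (by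
    rw [← ENNReal.ofReal_sum_of_nonneg fun i _ => (Real.rpow_pos_of_pos (S.ratio_pos i) s).le,
      hs, ENNReal.ofReal_one])).toMeasure

instance (hs : ∑ i, S.ratio i ^ s = 1) : IsProbabilityMeasure (S.codeMeasure hs) := by
  unfold codeMeasure
  infer_instance

lemma codeMeasure_setOf_take_eq (hs : ∑ i, S.ratio i ^ s = 1) (w : List ι) :
    S.codeMeasure hs {ω | Stream'.take w.length ω = w} = ENNReal.ofReal (S.wordRatio w ^ s) := by
  rw [codeMeasure, Measure.infinitePi_setOf_take_eq]
  simp_rw [PMF.toMeasure_apply_singleton _ _ (measurableSet_singleton _), PMF.ofFintype_apply]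
  induction w with
  | nil => simp
  | cons i w ih =>
    rw [List.map_cons, List.prod_cons, ih, wordRatio_cons,
      Real.mul_rpow (S.ratio_pos i).le (S.wordRatio_pos w).le,
      ENNReal.ofReal_mul (Real.rpow_pos_of_pos (S.ratio_pos i) s).le]

end CodeMeasure

section Coding

variable [MetricSpace E] (S : SimilarityIFS ι E) {X : Set E} {x₀ : E}

noncomputable def codingMap (x₀ : E) (ω : ℕ → ι) : E :=
  haveI : Nonempty E := ⟨x₀⟩
  limUnder atTop fun m => S.wordMap (Stream'.take m ω) x₀

lemma wordMap_take_mem_image (hXinv : ∀ i, MapsTo (S.map i) X X) (hx₀ : x₀ ∈ X) (ω : ℕ → ι)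
    {m m' : ℕ} (h : m ≤ m') :
    S.wordMap (Stream'.take m' ω) x₀ ∈ S.wordMap (Stream'.take m ω) '' X := by
  obtain ⟨v, hv⟩ := Stream'.take_prefix_take_left m m' ω h
  rw [← hv, wordMap_append]
  exact mem_image_of_mem _ (S.mapsTo_wordMap hXinv v hx₀)

lemma tendsto_codingMap [Finite ι] (hXc : IsCompact X) (hXinv : ∀ i, MapsTo (S.map i) X X)
    (hx₀ : x₀ ∈ X) (ω : ℕ → ι) :
    Tendsto (fun m => S.wordMap (Stream'.take m ω) x₀) atTop (𝓝 (S.codingMap x₀ ω)) := by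
  obtain ⟨R, ⟨hR0, hR1⟩, hR⟩ := S.exists_ratio_le
  have hcauchy : CauchySeq fun m => S.wordMap (Stream'.take m ω) x₀ := by
    refine cauchySeq_of_le_tendsto_0 (fun N => R ^ N * diam X) (fun n m N hn hm => ?_) ?_
    · obtain ⟨y, hy, hyn⟩ := S.wordMap_take_mem_image hXinv hx₀ ω hn
      obtain ⟨z, hz, hzm⟩ := S.wordMap_take_mem_image hXinv hx₀ ω hm
      rw [← hyn, ← hzm, dist_wordMap]
      have hratio := S.wordRatio_le_pow hR (Stream'.take N ω)
      rw [Stream'.length_take N ω] at hratio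
      exact mul_le_mul hratio (dist_le_diam_of_mem hXc.isBounded hy hz) dist_nonneg
        (pow_nonneg hR0 N)
    · simpa using (tendsto_pow_atTop_nhds_zero_of_lt_one hR0 hR1).mul_const (diam X)
  obtain ⟨x, -, hx⟩ := cauchySeq_tendsto_of_isComplete hXc.isComplete
    (fun m => S.mapsTo_wordMap hXinv _ hx₀) hcauchy
  exact tendsto_nhds_limUnder ⟨x, hx⟩

lemma codingMap_mem_image [Finite ι] (hXc : IsCompact X) (hXinv : ∀ i, MapsTo (S.map i) X X)
    (hx₀ : x₀ ∈ X) (ω : ℕ → ι) (m : ℕ) :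
    S.codingMap x₀ ω ∈ S.wordMap (Stream'.take m ω) '' X :=
  (hXc.image (S.lipschitzWith_wordMap _).continuous).isClosed.mem_of_tendsto
    (S.tendsto_codingMap hXc hXinv hx₀ ω)
    (eventually_atTop.2 ⟨m, fun _ h => S.wordMap_take_mem_image hXinv hx₀ ω h⟩)

lemma codeMeasure_preimage_le_card_mul [Fintype ι] [MeasurableSpace ι]
    [MeasurableSingletonClass ι] (hXc : IsCompact X) (hXinv : ∀ i, MapsTo (S.map i) X X)
    (hx₀ : x₀ ∈ X) {s : ℝ} (hs : ∑ i, S.ratio i ^ s = 1) {ρ : ℝ} (hρ0 : 0 < ρ) (hρ1 : ρ < 1)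
    {B : Set E} {F : Finset (List ι)} (hFρ : ∀ w ∈ F, S.wordRatio w ≤ ρ)
    (hF : ∀ w ∈ S.cutSet ρ, (S.wordMap w '' X ∩ B).Nonempty → w ∈ F) :
    S.codeMeasure hs (S.codingMap x₀ ⁻¹' B) ≤ F.card * ENNReal.ofReal ρ ^ s := by
  have hs0 := S.nonneg_of_sum_rpow_eq_one hs
  have hcover : S.codingMap x₀ ⁻¹' B ⊆ ⋃ w ∈ F, {ω | Stream'.take w.length ω = w} := by
    intro ω hω
    obtain ⟨m, hm⟩ := S.exists_take_mem_cutSet hρ0 hρ1 ω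
    refine mem_iUnion₂.2 ⟨Stream'.take m ω,
      hF _ hm ⟨_, S.codingMap_mem_image hXc hXinv hx₀ ω m, hω⟩, ?_⟩
    exact congrArg (Stream'.take · ω) (Stream'.length_take m ω)
  calc S.codeMeasure hs (S.codingMap x₀ ⁻¹' B)
      ≤ ∑ w ∈ F, S.codeMeasure hs {ω | Stream'.take w.length ω = w} :=
        (measure_mono hcover).trans (measure_biUnion_finset_le F _)
    _ ≤ ∑ _w ∈ F, ENNReal.ofReal ρ ^ s := by
        refine Finset.sum_le_sum fun w hw => ?_
        rw [codeMeasure_setOf_take_eq, ENNReal.ofReal_rpow_of_nonneg hρ0.le hs0]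
        exact ENNReal.ofReal_le_ofReal
          (Real.rpow_le_rpow (S.wordRatio_pos w).le (hFρ w hw) hs0)
    _ = F.card * ENNReal.ofReal ρ ^ s := by rw [Finset.sum_const, nsmul_eq_mul]

end Coding

section OpenSetCondition

variable [MetricSpace E] (S : SimilarityIFS ι E) {U : Set E}

lemma injective_map (i : ι) : Function.Injective (S.map i) := fun x y h => by
  have := S.dist_map i x y
  rw [h, dist_self, zero_eq_mul] at this
  exact dist_eq_zero.1 (this.resolve_left (S.ratio_pos i).ne')

lemma disjoint_wordMap_image (hUinv : ∀ i, MapsTo (S.map i) U U)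
    (hUdisj : Pairwise fun i j => Disjoint (S.map i '' U) (S.map j '' U)) :
    ∀ {w v : List ι}, ¬w <+: v → ¬v <+: w → Disjoint (S.wordMap w '' U) (S.wordMap v '' U)
  | [], _, h, _ => absurd (List.nil_prefix) h
  | _ :: _, [], _, h' => absurd (List.nil_prefix) h'
  | i :: w, j :: v, h, h' => by
    simp only [wordMap_cons, image_comp]
    by_cases hij : i = j
    · subst hij
      simp only [List.cons_prefix_cons, true_and] at h h'
      exact (disjoint_image_iff (S.injective_map i)).2 (disjoint_wordMap_image hUinv hUdisj h h')
    · exact (hUdisj hij).mono (image_mono (S.mapsTo_wordMap hUinv w).image_subset)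
        (image_mono (S.mapsTo_wordMap hUinv v).image_subset)

lemma subset_closure_of_mapsTo [Finite ι] {X : Set E} (hX : X = ⋃ i, S.map i '' X)
    (hXb : Bornology.IsBounded X) (hUne : U.Nonempty) (hUinv : ∀ i, MapsTo (S.map i) U U) :
    X ⊆ closure U := by
  intro x hx
  obtain ⟨u, hu⟩ := hUne
  obtain ⟨R, ⟨hR0, hR1⟩, hR⟩ := S.exists_ratio_le
  have hlim : Tendsto (fun m : ℕ => R ^ m * (diam X + dist x u)) atTop (𝓝 0) := by
    simpa using (tendsto_pow_atTop_nhds_zero_of_lt_one hR0 hR1).mul_const (diam X + dist x u)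
  refine Metric.mem_closure_iff.2 fun ε hε => ?_
  obtain ⟨m, hm⟩ := (hlim.eventually (gt_mem_nhds hε)).exists
  obtain ⟨v, z, hz, hzx⟩ := mem_iUnion.1 (S.subset_iUnion_wordMap_image hX m hx)
  refine ⟨S.wordMap (List.ofFn v) u, S.mapsTo_wordMap hUinv _ hu, hm.trans_le' ?_⟩
  have hdist : dist x (S.wordMap (List.ofFn v) u) = S.wordRatio (List.ofFn v) * dist z u := by
    rw [← hzx, dist_wordMap]
  rw [hdist]
  refine mul_le_mul (by simpa using S.wordRatio_le_pow hR (List.ofFn v)) ?_ dist_nonneg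
    (pow_nonneg hR0 m)
  calc dist z u ≤ dist z x + dist x u := dist_triangle z x u
    _ ≤ diam X + dist x u := by gcongr; exact dist_le_diam_of_mem hXb hz hx

end OpenSetCondition

section Euclidean

variable {κ : Type*} [Fintype κ] (S : SimilarityIFS ι (κ → ℝ)) {U X : Set (κ → ℝ)}

theorem card_mul_volume_le_of_isAntichain (hUo : IsOpen U) (hUb : Bornology.IsBounded U)
    (hUinv : ∀ i, MapsTo (S.map i) U U)
    (hUdisj : Pairwise fun i j => Disjoint (S.map i '' U) (S.map j '' U))
    (hXU : X ⊆ closure U) {c ρ : ℝ} (hc : 0 < c) (hρ : 0 < ρ) (x : κ → ℝ)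
    {F : Finset (List ι)} (hF : IsAntichain (· <+: ·) (F : Set (List ι)))
    (hratio : ∀ w ∈ F, c * ρ < S.wordRatio w ∧ S.wordRatio w ≤ ρ)
    (hmeet : ∀ w ∈ F, (S.wordMap w '' X ∩ closedBall x ρ).Nonempty) :
    (F.card : ℝ≥0∞) * (ENNReal.ofReal (c ^ Fintype.card κ) * volume U) ≤
      ENNReal.ofReal ((2 * (diam U + 1)) ^ Fintype.card κ) := by
  set d := Fintype.card κ
  have hsub : ∀ w ∈ F, S.wordMap w '' U ⊆ closedBall x ((diam U + 1) * ρ) := by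
    rintro w hw _ ⟨u, hu, rfl⟩
    obtain ⟨_, ⟨z, hz, rfl⟩, hzx⟩ := hmeet w hw
    have hdist : dist u z ≤ diam U := by
      rw [← diam_closure]
      exact dist_le_diam_of_mem hUb.closure (subset_closure hu) (hXU hz)
    calc dist (S.wordMap w u) x ≤ dist (S.wordMap w u) (S.wordMap w z) + dist (S.wordMap w z) x :=
          dist_triangle _ _ _
      _ ≤ ρ * diam U + ρ := by
          rw [dist_wordMap]
          gcongr
          exacts [(hratio w hw).2, mem_closedBall.1 hzx]
      _ = (diam U + 1) * ρ := by ring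
  have hvol : ∀ w ∈ F, ENNReal.ofReal ((c * ρ) ^ d) * volume U ≤ volume (S.wordMap w '' U) :=
    fun w hw => calc
      ENNReal.ofReal ((c * ρ) ^ d) * volume U ≤ ENNReal.ofReal (S.wordRatio w ^ d) * volume U := by
        gcongr; exact (hratio w hw).1.le
      _ ≤ volume (S.wordMap w '' U) :=
        ofReal_pow_mul_volume_le_volume_image (S.wordRatio_pos w) (S.dist_wordMap w) U
  have hdisj : (F : Set (List ι)).PairwiseDisjoint fun w => S.wordMap w '' U :=
    fun w hw v hv hne => S.disjoint_wordMap_image hUinv hUdisj (hF hw hv hne) (hF hv hw hne.symm)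
  have hmeas (w : List ι) : MeasurableSet (S.wordMap w '' U) :=
    ((S.lipschitzWith_wordMap w).continuous.measurableEmbedding
      (S.antilipschitzWith_wordMap w).injective).measurableSet_image.2 hUo.measurableSet
  have hρd : ENNReal.ofReal (ρ ^ d) ≠ 0 := (ofReal_pos.2 (pow_pos hρ d)).ne'
  refine (ENNReal.mul_le_mul_iff_left hρd ofReal_ne_top).1 ?_
  calc (F.card : ℝ≥0∞) * (ENNReal.ofReal (c ^ d) * volume U) * ENNReal.ofReal (ρ ^ d)
      = ∑ _w ∈ F, ENNReal.ofReal ((c * ρ) ^ d) * volume U := by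
        rw [Finset.sum_const, nsmul_eq_mul, mul_pow, ENNReal.ofReal_mul (by positivity)]
        ring
    _ ≤ ∑ w ∈ F, volume (S.wordMap w '' U) := Finset.sum_le_sum hvol
    _ = volume (⋃ w ∈ F, S.wordMap w '' U) :=
        (measure_biUnion_finset hdisj fun w _ => hmeas w).symm
    _ ≤ volume (closedBall x ((diam U + 1) * ρ)) := measure_mono (iUnion₂_subset hsub)
    _ = ENNReal.ofReal ((2 * (diam U + 1)) ^ d) * ENNReal.ofReal (ρ ^ d) := by
        rw [Real.volume_pi_closedBall _ (by positivity), ← ENNReal.ofReal_mul (by positivity),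
          ← mul_pow, mul_assoc]

theorem exists_codeMeasure_preimage_closedBall_le [Fintype ι] [MeasurableSpace ι]
    [MeasurableSingletonClass ι] (hUne : U.Nonempty) (hUo : IsOpen U)
    (hUb : Bornology.IsBounded U) (hUinv : ∀ i, MapsTo (S.map i) U U)
    (hUdisj : Pairwise fun i j => Disjoint (S.map i '' U) (S.map j '' U))
    (hXc : IsCompact X) (hX : X = ⋃ i, S.map i '' X) {x₀ : κ → ℝ} (hx₀ : x₀ ∈ X) {s : ℝ}
    (hs : ∑ i, S.ratio i ^ s = 1) :
    ∃ C : ℝ≥0∞, C ≠ ∞ ∧ ∀ x ρ, 0 < ρ → ρ < 1 →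
      S.codeMeasure hs (S.codingMap x₀ ⁻¹' closedBall x ρ) ≤ C * ENNReal.ofReal ρ ^ s := by
  have hXinv := S.mapsTo_of_eq_iUnion hX
  have hXU := S.subset_closure_of_mapsTo hX hXc.isBounded hUne hUinv
  obtain ⟨c, hc0, hc⟩ := S.exists_le_ratio
  set A := ENNReal.ofReal (c ^ Fintype.card κ) * volume U
  have hA : A ≠ 0 :=
    mul_ne_zero (ofReal_pos.2 (pow_pos hc0 _)).ne' (hUo.measure_pos volume hUne).ne'
  refine ⟨ENNReal.ofReal ((2 * (diam U + 1)) ^ Fintype.card κ) / A,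
    ENNReal.div_ne_top ofReal_ne_top hA, fun x ρ hρ0 hρ1 => ?_⟩
  have hfin : {w ∈ S.cutSet ρ | (S.wordMap w '' X ∩ closedBall x ρ).Nonempty}.Finite :=
    (S.finite_cutSet hρ0).subset (sep_subset _ _)
  have hmem (w : List ι) : w ∈ hfin.toFinset ↔
      w ∈ S.cutSet ρ ∧ (S.wordMap w '' X ∩ closedBall x ρ).Nonempty :=
    hfin.mem_toFinset
  have hcard : (hfin.toFinset.card : ℝ≥0∞) ≤
      ENNReal.ofReal ((2 * (diam U + 1)) ^ Fintype.card κ) / A := by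
    refine (ENNReal.le_div_iff_mul_le (.inl hA) (.inr ofReal_ne_top)).2
      (S.card_mul_volume_le_of_isAntichain hUo hUb hUinv hUdisj hXU hc0 hρ0 x ?_
        (fun w hw => ?_) fun w hw => ((hmem w).1 hw).2)
    · exact (S.isAntichain_cutSet ρ).subset fun w hw => ((hmem w).1 hw).1
    · exact ⟨S.mul_lt_wordRatio_of_mem_cutSet hc ((hmem w).1 hw).1, ((hmem w).1 hw).1.1⟩
  calc _ ≤ hfin.toFinset.card * ENNReal.ofReal ρ ^ s :=
        S.codeMeasure_preimage_le_card_mul hXc hXinv hx₀ hs hρ0 hρ1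
          (fun w hw => ((hmem w).1 hw).1.1) fun w hw hmeet => (hmem w).2 ⟨hw, hmeet⟩
    _ ≤ _ := by gcongr

theorem le_dimH_of_sum_rpow_eq_one [Fintype ι] (hUne : U.Nonempty) (hUo : IsOpen U)
    (hUb : Bornology.IsBounded U) (hUinv : ∀ i, MapsTo (S.map i) U U)
    (hUdisj : Pairwise fun i j => Disjoint (S.map i '' U) (S.map j '' U))
    (hXne : X.Nonempty) (hXc : IsCompact X) (hX : X = ⋃ i, S.map i '' X) {s : ℝ}
    (hs : ∑ i, S.ratio i ^ s = 1) : ENNReal.ofReal s ≤ dimH X := by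
  let : MeasurableSpace ι := ⊤
  have : MeasurableSingletonClass ι := ⟨fun _ => trivial⟩
  obtain ⟨x₀, hx₀⟩ := hXne
  obtain ⟨C, hC, hball⟩ := S.exists_codeMeasure_preimage_closedBall_le hUne hUo hUb hUinv
    hUdisj hXc hX hx₀ hs
  set μ := OuterMeasure.map (S.codingMap x₀) (S.codeMeasure hs).toOuterMeasure
  have hμX : μ X = 1 := by
    have hpre : S.codingMap x₀ ⁻¹' X = univ := eq_univ_of_forall fun ω => by
      have := S.codingMap_mem_image hXc (S.mapsTo_of_eq_iUnion hX) hx₀ ω 0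
      rwa [Stream'.take_zero ω, wordMap_nil, image_id] at this
    rw [OuterMeasure.map_apply, hpre, Measure.coe_toOuterMeasure, measure_univ]
  have hmass := μ.le_mul_hausdorffMeasure_of_closedBall_le (C := C + 1)
    (ENNReal.add_ne_top.2 ⟨hC, one_ne_top⟩) (by simp) one_pos
    (fun x ρ h0 h1 => (hball x ρ h0 h1).trans (by gcongr; exact le_self_add)) X
  have hne : μH[s] X ≠ 0 := fun h => by
    rw [hμX, h, mul_zero] at hmass
    exact one_ne_zero (nonpos_iff_eq_zero.1 hmass)
  refine le_dimH_of_hausdorffMeasure_ne_zero (d := s.toNNReal) ?_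
  rwa [Real.coe_toNNReal _ (S.nonneg_of_sum_rpow_eq_one hs)]

end Euclidean

end SimilarityIFS

theorem stmt11_general (k n : ℕ) (φ : Fin n → (Fin k → ℝ) → (Fin k → ℝ))
    (r : Fin n → ℝ) (hr : ∀ i, 0 < r i ∧ r i < 1)
    (hsim : ∀ i x y, dist (φ i x) (φ i y) = r i * dist x y)
    (hOSC : ∃ U : Set (Fin k → ℝ), U.Nonempty ∧ IsOpen U ∧ Bornology.IsBounded U ∧
      (∀ i, φ i '' U ⊆ U) ∧ ∀ i j, i ≠ j → Disjoint (φ i '' U) (φ j '' U))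
    (X : Set (Fin k → ℝ)) (hXne : X.Nonempty) (hXcp : IsCompact X)
    (hX : X = ⋃ i, φ i '' X)
    (s : ℝ) (hs : ∑ i, r i ^ s = 1) :
    dimH X = ENNReal.ofReal s := by
  obtain ⟨U, hUne, hUo, hUb, hUinv, hUdisj⟩ := hOSC
  let S : SimilarityIFS (Fin n) (Fin k → ℝ) :=
    ⟨φ, r, fun i => (hr i).1, fun i => (hr i).2, hsim⟩
  exact le_antisymm (S.dimH_le_of_sum_rpow_eq_one hX hXcp.isBounded hs)
    (S.le_dimH_of_sum_rpow_eq_one hUne hUo hUb (fun i => mapsTo_iff_image_subset.2 (hUinv i))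
      hUdisj hXne hXcp hX hs)

/-- Hausdorff dimension of a self-similar set under the open set condition equals the
similarity dimension. -/
theorem stmt11 (k n : ℕ) (hn : 2 ≤ n) (φ : Fin n → (Fin k → ℝ) → (Fin k → ℝ))
    (r : Fin n → ℝ) (hr : ∀ i, 0 < r i ∧ r i < 1)
    (hsim : ∀ i x y, dist (φ i x) (φ i y) = r i * dist x y)
    (hOSC : ∃ U : Set (Fin k → ℝ), U.Nonempty ∧ IsOpen U ∧ Bornology.IsBounded U ∧
      (∀ i, φ i '' U ⊆ U) ∧ ∀ i j, i ≠ j → Disjoint (φ i '' U) (φ j '' U))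
    (X : Set (Fin k → ℝ)) (hXne : X.Nonempty) (hXcp : IsCompact X)
    (hX : X = ⋃ i, φ i '' X)
    (s : ℝ) (hs : ∑ i, r i ^ s = 1) :
    dimH X = ENNReal.ofReal s :=
  stmt11_general k n φ r hr hsim hOSC X hXne hXcp hX s hs
end

section
/- Let M ⊂ ℝ^k be a smooth compact ℓ-dimensional submanifold. Then M satisfies the local scaling property with respect to κ = ℓ/k and g(r) = r^k: there exist constants c₃, c₄, r₀ > 0 such that for all 0 < δ < r < r₀, all x ∈ M, c₃ δ^{k−ℓ} r^ℓ ≤ H^k(B(x,r) ∩ Δ(M,δ)) ≤ c₄ δ^{k−ℓ} r^ℓ. -/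
open Set MeasureTheory Metric Filter Topology ENNReal NNReal

/-!
Near each point of `M` a `C¹` diffeomorphism `f` with inverse `g` flattens `M` onto the
coordinate plane `ℝ^ℓ × {0}`, and both maps are `L`-Lipschitz on suitable balls. For `x ∈ M`
near the centre of such a chart, `g` maps the box around `f x` with half-widths `r/(4L)` in the
`ℓ` tangential and `δ/(4L)` in the `k - ℓ` normal coordinates into `B(x,r) ∩ Δ(M,δ)`, and that
set is contained in the `g`-image of the box with half-widths `Lr` and `Lδ`. Both boxes have
volume comparable to `δ^(k-ℓ) r^ℓ`, and `L`-Lipschitz maps enlarge `k`-dimensional volume by at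
most `L^k`. Compactness of `M` makes the constants uniform.
-/
section Slab

variable {k : ℕ}

def coordPlane (l : ℕ) : Set (Fin k → ℝ) := {y | ∀ i : Fin k, l ≤ (i : ℕ) → y i = 0}

def flatten (l : ℕ) (q : Fin k → ℝ) : Fin k → ℝ := fun i => if (i : ℕ) < l then q i else 0

-- `Fin k → ℝ` carries the sup metric, so `slab l z a a = closedBall z a`.
def slab (l : ℕ) (z : Fin k → ℝ) (a b : ℝ) : Set (Fin k → ℝ) :=
  {q | ∀ i : Fin k, dist (q i) (z i) ≤ if (i : ℕ) < l then a else b}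

variable {l : ℕ} {z p q : Fin k → ℝ} {a b : ℝ}

lemma flatten_mem_coordPlane (l : ℕ) (q : Fin k → ℝ) : flatten l q ∈ coordPlane l := by
  intro i hi
  simp [flatten, Nat.not_lt.2 hi]

lemma volume_slab (hl : l ≤ k) (z : Fin k → ℝ) (ha : 0 ≤ a) (hb : 0 ≤ b) :
    volume (slab l z a b) = ENNReal.ofReal ((2 * a) ^ l * (2 * b) ^ (k - l)) := by
  have hpi : slab l z a b =
      univ.pi fun i : Fin k => closedBall (z i) (if (i : ℕ) < l then a else b) := by
    ext q
    simp [slab, mem_closedBall]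
  have hcard : (Finset.univ.filter fun i : Fin k => (i : ℕ) < l).card = l := by
    simp [Fin.card_filter_val_lt, hl]
  have hcard' : (Finset.univ.filter fun i : Fin k => ¬(i : ℕ) < l).card = k - l := by
    rw [Finset.filter_not, Finset.card_sdiff_of_subset (Finset.filter_subset _ _), hcard]
    simp
  rw [hpi, volume_pi_pi]
  simp_rw [Real.volume_closedBall, apply_ite (fun c => ENNReal.ofReal (2 * c))]
  rw [Finset.prod_ite, Finset.prod_const, Finset.prod_const, hcard, hcard',
    ← ENNReal.ofReal_pow (by positivity), ← ENNReal.ofReal_pow (by positivity),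
    ← ENNReal.ofReal_mul (by positivity)]

lemma slab_subset_closedBall (ha : 0 ≤ a) (hba : b ≤ a) : slab l z a b ⊆ closedBall z a := by
  intro q hq
  refine (dist_pi_le_iff ha).2 fun i => (hq i).trans ?_
  split_ifs
  exacts [le_rfl, hba]

lemma dist_flatten_le (hz : z ∈ coordPlane l) (hq : q ∈ slab l z a b) (hb : 0 ≤ b) :
    dist q (flatten l q) ≤ b := by
  refine (dist_pi_le_iff hb).2 fun i => ?_
  by_cases hi : (i : ℕ) < l
  · simp [flatten, hi, hb]
  · simpa [flatten, hi, hz i (not_lt.1 hi)] using hq i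

lemma flatten_mem_slab (hz : z ∈ coordPlane l) (hq : q ∈ slab l z a b) (hb : 0 ≤ b) :
    flatten l q ∈ slab l z a b := by
  intro i
  by_cases hi : (i : ℕ) < l
  · simpa [flatten, hi] using hq i
  · simp [flatten, hi, hz i (not_lt.1 hi), hb]

lemma mem_slab_of_dist_le (hz : z ∈ coordPlane l) (hp : p ∈ coordPlane l) (hqz : dist q z ≤ a)
    (hqp : dist q p ≤ b) : q ∈ slab l z a b := by
  intro i
  split_ifs with hi
  · exact (dist_le_pi_dist q z i).trans hqz
  · have := (dist_le_pi_dist q p i).trans hqp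
    rwa [hp i (not_lt.1 hi), ← hz i (not_lt.1 hi)] at this

end Slab

lemma LipschitzOnWith.volume_image_le {ι : Type*} [Fintype ι] {f : (ι → ℝ) → ι → ℝ} {K : ℝ≥0}
    {s : Set (ι → ℝ)} (hf : LipschitzOnWith K f s) :
    volume (f '' s) ≤ ENNReal.ofReal ((K : ℝ) ^ Fintype.card ι) * volume s := by
  rw [← hausdorffMeasure_pi_real, ENNReal.ofReal_pow K.coe_nonneg, ENNReal.ofReal_coe_nnreal,
    ← ENNReal.rpow_natCast]
  exact hf.hausdorffMeasure_image_le (Nat.cast_nonneg _)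

structure StraighteningChart {k : ℕ} (l : ℕ) (M : Set (Fin k → ℝ)) (x₀ : Fin k → ℝ) where
  ρ : ℝ
  L : ℝ≥0
  f : (Fin k → ℝ) → Fin k → ℝ
  g : (Fin k → ℝ) → Fin k → ℝ
  ρ_pos : 0 < ρ
  one_le_L : 1 ≤ L
  lipschitzOnWith_f : LipschitzOnWith L f (closedBall x₀ ρ)
  lipschitzOnWith_g : LipschitzOnWith L g (closedBall (f x₀) (L * ρ))
  g_f : ∀ y ∈ closedBall x₀ ρ, g (f y) = y
  f_g : ∀ q ∈ closedBall (f x₀) (L * ρ), f (g q) = q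
  mem_iff : ∀ y ∈ closedBall x₀ ρ, y ∈ M ↔ f y ∈ coordPlane l
  g_mem : ∀ q ∈ closedBall (f x₀) (L * ρ), q ∈ coordPlane l → g q ∈ M

lemma exists_straighteningChart {k l : ℕ} {M U : Set (Fin k → ℝ)} {f g : (Fin k → ℝ) → Fin k → ℝ}
    {x₀ : Fin k → ℝ} (hU : IsOpen U) (hx₀ : x₀ ∈ U) (hf : ContDiffOn ℝ 1 f U)
    (hV : IsOpen (f '' U)) (hg : ContDiffOn ℝ 1 g (f '' U)) (hgf : ∀ y ∈ U, g (f y) = y)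
    (hM : f '' (M ∩ U) = f '' U ∩ coordPlane l) :
    Nonempty (StraighteningChart l M x₀) := by
  have hfx₀ : f x₀ ∈ f '' U := mem_image_of_mem f hx₀
  obtain ⟨K₁, t₁, ht₁, hK₁⟩ := (hf.contDiffAt (hU.mem_nhds hx₀)).exists_lipschitzOnWith
  obtain ⟨K₂, t₂, ht₂, hK₂⟩ := (hg.contDiffAt (hV.mem_nhds hfx₀)).exists_lipschitzOnWith
  obtain ⟨ε₁, hε₁, hε₁t⟩ :=
    nhds_basis_closedBall.mem_iff.1 (inter_mem ht₁ (hU.mem_nhds hx₀))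
  obtain ⟨ε₂, hε₂, hε₂t⟩ :=
    nhds_basis_closedBall.mem_iff.1 (inter_mem ht₂ (hV.mem_nhds hfx₀))
  set L : ℝ≥0 := max (max K₁ K₂) 1
  have hL : (0 : ℝ) < L := zero_lt_one.trans_le (le_max_right _ _)
  set ρ : ℝ := min ε₁ (ε₂ / L)
  have hball₁ : closedBall x₀ ρ ⊆ t₁ ∩ U :=
    (closedBall_subset_closedBall (min_le_left _ _)).trans hε₁t
  have hball₂ : closedBall (f x₀) (L * ρ) ⊆ t₂ ∩ f '' U := by
    refine (closedBall_subset_closedBall ?_).trans hε₂t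
    calc (L : ℝ) * ρ ≤ L * (ε₂ / L) := by gcongr; exact min_le_right _ _
      _ = ε₂ := mul_div_cancel₀ _ hL.ne'
  have hgf' : ∀ y ∈ closedBall x₀ ρ, g (f y) = y := fun y hy => hgf y (hball₁ hy).2
  refine ⟨⟨ρ, L, f, g, lt_min hε₁ (div_pos hε₂ hL), le_max_right _ _,
    (hK₁.mono (hball₁.trans inter_subset_left)).weaken
      ((le_max_left _ _).trans (le_max_left _ _)),
    (hK₂.mono (hball₂.trans inter_subset_left)).weaken
      ((le_max_right _ _).trans (le_max_left _ _)),
    hgf', ?_, ?_, ?_⟩⟩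
  · intro q hq
    obtain ⟨y, hy, rfl⟩ := (hball₂ hq).2
    rw [hgf y hy]
  · intro y hy
    constructor
    · intro hyM
      have : f y ∈ f '' (M ∩ U) := mem_image_of_mem f ⟨hyM, (hball₁ hy).2⟩
      exact (hM ▸ this).2
    · intro hfy
      obtain ⟨m, ⟨hmM, hmU⟩, hm⟩ : f y ∈ f '' (M ∩ U) :=
        hM ▸ ⟨mem_image_of_mem f (hball₁ hy).2, hfy⟩
      rwa [← hgf' y hy, ← hm, hgf m hmU]
  · intro q hq hqM
    obtain ⟨m, ⟨hmM, hmU⟩, rfl⟩ : q ∈ f '' (M ∩ U) := hM ▸ ⟨(hball₂ hq).2, hqM⟩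
    rwa [hgf m hmU]

def LocalScalingAt {k : ℕ} (l : ℕ) (M : Set (Fin k → ℝ)) (C ρ : ℝ) (x : Fin k → ℝ) : Prop :=
  ∀ δ r : ℝ, 0 < δ → δ < r → r < ρ →
    ENNReal.ofReal (C⁻¹ * δ ^ (k - l) * r ^ l) ≤
        volume (closedBall x r ∩ {y | infDist y M < δ}) ∧
      volume (closedBall x r ∩ {y | infDist y M < δ}) ≤ ENNReal.ofReal (C * δ ^ (k - l) * r ^ l)

namespace StraighteningChart

variable {k l : ℕ} {M : Set (Fin k → ℝ)} {x₀ x : Fin k → ℝ} (φ : StraighteningChart l M x₀)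

lemma one_le_coe_L : (1 : ℝ) ≤ φ.L := by exact_mod_cast φ.one_le_L

lemma L_pos : (0 : ℝ) < φ.L := zero_lt_one.trans_le φ.one_le_coe_L

lemma closedBall_f_subset (hx : dist x x₀ < φ.ρ / 2) {a : ℝ} (ha : a ≤ φ.L * (φ.ρ / 2)) :
    closedBall (φ.f x) a ⊆ closedBall (φ.f x₀) (φ.L * φ.ρ) := by
  have hfx : dist (φ.f x) (φ.f x₀) ≤ φ.L * (φ.ρ / 2) :=
    (φ.lipschitzOnWith_f.dist_le_mul x (mem_closedBall.2 (by linarith [φ.ρ_pos])) x₀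
      (mem_closedBall_self φ.ρ_pos.le)).trans (by gcongr)
  exact closedBall_subset_closedBall' (by linarith)

lemma slab_subset_closedBall_f (hx : dist x x₀ < φ.ρ / 2) {a b : ℝ} (hb : 0 ≤ b) (hba : b ≤ a)
    (ha : a ≤ φ.L * (φ.ρ / 2)) : slab l (φ.f x) a b ⊆ closedBall (φ.f x₀) (φ.L * φ.ρ) :=
  (slab_subset_closedBall (hb.trans hba) hba).trans (φ.closedBall_f_subset hx ha)

lemma div_four_mul_L_le {r : ℝ} (hr0 : 0 ≤ r) (hr : r ≤ φ.ρ / 4) :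
    r / (4 * φ.L) ≤ φ.L * (φ.ρ / 2) := by
  calc r / (4 * φ.L) ≤ r / 4 := by gcongr; linarith [φ.one_le_coe_L]
    _ ≤ φ.ρ / 2 := by linarith
    _ ≤ φ.L * (φ.ρ / 2) := le_mul_of_one_le_left (by linarith [φ.ρ_pos]) φ.one_le_coe_L

lemma image_slab_subset (hxM : x ∈ M) (hx : dist x x₀ < φ.ρ / 2) {δ r : ℝ} (hδ : 0 < δ)
    (hδr : δ ≤ r) (hr : r ≤ φ.ρ / 4) :
    φ.g '' slab l (φ.f x) (r / (4 * φ.L)) (δ / (4 * φ.L)) ⊆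
      closedBall x r ∩ {y | infDist y M < δ} := by
  have hL := φ.L_pos
  have hxρ : x ∈ closedBall x₀ φ.ρ := mem_closedBall.2 (by linarith [φ.ρ_pos])
  have hfx : φ.f x ∈ coordPlane l := (φ.mem_iff x hxρ).1 hxM
  have hb : 0 ≤ δ / (4 * φ.L) := by positivity
  have hab : δ / (4 * φ.L) ≤ r / (4 * φ.L) := by gcongr
  have hball : closedBall (φ.f x) (r / (4 * φ.L)) ⊆ closedBall (φ.f x₀) (φ.L * φ.ρ) :=
    φ.closedBall_f_subset hx (φ.div_four_mul_L_le (hδ.le.trans hδr) hr)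
  rintro _ ⟨q, hq, rfl⟩
  have hqx := slab_subset_closedBall (hb.trans hab) hab hq
  have hq' := flatten_mem_slab hfx hq hb
  have hgq : dist (φ.g q) x ≤ r / 4 := by
    calc dist (φ.g q) x = dist (φ.g q) (φ.g (φ.f x)) := by rw [φ.g_f x hxρ]
      _ ≤ φ.L * dist q (φ.f x) :=
        φ.lipschitzOnWith_g.dist_le_mul _ (hball hqx) _ (hball (mem_closedBall_self (hb.trans hab)))
      _ ≤ φ.L * (r / (4 * φ.L)) := by gcongr; exact hqx
      _ = r / 4 := by field_simp
  have hgq' : dist (φ.g q) (φ.g (flatten l q)) ≤ δ / 4 := by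
    calc dist (φ.g q) (φ.g (flatten l q)) ≤ φ.L * dist q (flatten l q) :=
        φ.lipschitzOnWith_g.dist_le_mul _ (hball hqx) _
          (hball (slab_subset_closedBall (hb.trans hab) hab hq'))
      _ ≤ φ.L * (δ / (4 * φ.L)) := by gcongr; exact dist_flatten_le hfx hq hb
      _ = δ / 4 := by field_simp
  have hflatM : φ.g (flatten l q) ∈ M :=
    φ.g_mem _ (hball (slab_subset_closedBall (hb.trans hab) hab hq'))
      (flatten_mem_coordPlane l q)
  refine ⟨mem_closedBall.2 (by linarith [φ.ρ_pos]), ?_⟩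
  exact (infDist_le_dist_of_mem hflatM).trans_lt (by linarith)

lemma subset_image_slab (hMne : M.Nonempty) (hxM : x ∈ M) (hx : dist x x₀ < φ.ρ / 2) {δ r : ℝ}
    (hδr : δ ≤ r) (hr : r ≤ φ.ρ / 4) :
    closedBall x r ∩ {y | infDist y M < δ} ⊆ φ.g '' slab l (φ.f x) (φ.L * r) (φ.L * δ) := by
  rintro y ⟨hyx, hyM⟩
  obtain ⟨p, hpM, hyp⟩ := (infDist_lt_iff hMne).1 hyM
  rw [mem_closedBall] at hyx
  have hxρ : x ∈ closedBall x₀ φ.ρ := mem_closedBall.2 (by linarith [φ.ρ_pos])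
  have hyρ : y ∈ closedBall x₀ φ.ρ :=
    mem_closedBall.2 (by linarith [φ.ρ_pos, dist_triangle y x x₀])
  have hpρ : p ∈ closedBall x₀ φ.ρ := by
    rw [mem_closedBall]
    linarith [dist_triangle p y x₀, dist_comm p y, dist_triangle y x x₀]
  refine ⟨φ.f y, mem_slab_of_dist_le ((φ.mem_iff x hxρ).1 hxM) ((φ.mem_iff p hpρ).1 hpM) ?_ ?_,
    φ.g_f y hyρ⟩
  · exact (φ.lipschitzOnWith_f.dist_le_mul y hyρ x hxρ).trans (by gcongr)
  · exact (φ.lipschitzOnWith_f.dist_le_mul y hyρ p hpρ).trans (by gcongr)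

lemma le_volume (hl : l ≤ k) (hxM : x ∈ M) (hx : dist x x₀ < φ.ρ / 2) {δ r : ℝ} (hδ : 0 < δ)
    (hδr : δ ≤ r) (hr : r ≤ φ.ρ / 4) :
    ENNReal.ofReal (((2 : ℝ) ^ k * (φ.L : ℝ) ^ (2 * k))⁻¹ * δ ^ (k - l) * r ^ l) ≤
      volume (closedBall x r ∩ {y | infDist y M < δ}) := by
  have hL := φ.L_pos
  have hr0 : 0 < r := hδ.trans_le hδr
  set S := slab l (φ.f x) (r / (4 * φ.L)) (δ / (4 * φ.L))
  have hgS := φ.image_slab_subset hxM hx hδ hδr hr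
  have hgS_ball : φ.g '' S ⊆ closedBall x₀ φ.ρ :=
    hgS.trans (inter_subset_left.trans (closedBall_subset_closedBall' (by linarith)))
  have hS : S ⊆ φ.f '' (φ.g '' S) := by
    intro q hq
    exact ⟨φ.g q, mem_image_of_mem _ hq, φ.f_g q (φ.slab_subset_closedBall_f hx (by positivity)
      (by gcongr) (φ.div_four_mul_L_le hr0.le hr) hq)⟩
  have hvolS : volume S = ENNReal.ofReal ((φ.L : ℝ) ^ k) *
      ENNReal.ofReal (((2 : ℝ) ^ k * (φ.L : ℝ) ^ (2 * k))⁻¹ * δ ^ (k - l) * r ^ l) := by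
    rw [volume_slab hl _ (by positivity) (by positivity), ← ENNReal.ofReal_mul (by positivity)]
    congr 1
    have h2 : ∀ t : ℝ, 2 * (t / (4 * φ.L)) = t / (2 * φ.L) := fun t => by field_simp; ring
    rw [h2, h2, div_pow, div_pow, div_mul_div_comm, ← pow_add, Nat.add_sub_cancel' hl, mul_pow,
      pow_mul]
    field_simp
    ring
  rw [← ENNReal.mul_le_mul_iff_right (a := ENNReal.ofReal ((φ.L : ℝ) ^ k))
    (ENNReal.ofReal_pos.2 (by positivity)).ne' ENNReal.ofReal_ne_top, ← hvolS]
  calc volume S ≤ volume (φ.f '' (φ.g '' S)) := measure_mono hS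
    _ ≤ ENNReal.ofReal ((φ.L : ℝ) ^ k) * volume (φ.g '' S) := by
      simpa using (φ.lipschitzOnWith_f.mono hgS_ball).volume_image_le
    _ ≤ ENNReal.ofReal ((φ.L : ℝ) ^ k) * volume (closedBall x r ∩ {y | infDist y M < δ}) := by
      gcongr

lemma volume_le (hl : l ≤ k) (hMne : M.Nonempty) (hxM : x ∈ M) (hx : dist x x₀ < φ.ρ / 2)
    {δ r : ℝ} (hδ : 0 < δ) (hδr : δ ≤ r) (hr : r ≤ φ.ρ / 4) :
    volume (closedBall x r ∩ {y | infDist y M < δ}) ≤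
      ENNReal.ofReal ((2 : ℝ) ^ k * (φ.L : ℝ) ^ (2 * k) * δ ^ (k - l) * r ^ l) := by
  have hL := φ.L_pos
  have hr0 : 0 < r := hδ.trans_le hδr
  have hS : slab l (φ.f x) (φ.L * r) (φ.L * δ) ⊆ closedBall (φ.f x₀) (φ.L * φ.ρ) :=
    φ.slab_subset_closedBall_f hx (by positivity) (by gcongr) (by gcongr; linarith [φ.ρ_pos])
  calc volume (closedBall x r ∩ {y | infDist y M < δ})
      ≤ volume (φ.g '' slab l (φ.f x) (φ.L * r) (φ.L * δ)) :=
        measure_mono (φ.subset_image_slab hMne hxM hx hδr hr)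
    _ ≤ ENNReal.ofReal ((φ.L : ℝ) ^ k) * volume (slab l (φ.f x) (φ.L * r) (φ.L * δ)) := by
      simpa using (φ.lipschitzOnWith_g.mono hS).volume_image_le
    _ = ENNReal.ofReal ((2 : ℝ) ^ k * (φ.L : ℝ) ^ (2 * k) * δ ^ (k - l) * r ^ l) := by
      rw [volume_slab hl _ (by positivity) (by positivity), ← ENNReal.ofReal_mul (by positivity)]
      congr 1
      obtain ⟨m, rfl⟩ := Nat.exists_eq_add_of_le hl
      rw [Nat.add_sub_cancel_left]
      ring

lemma localScalingAt (hl : l ≤ k) (hMne : M.Nonempty) (hxM : x ∈ M)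
    (hx : dist x x₀ < φ.ρ / 2) :
    LocalScalingAt l M ((2 : ℝ) ^ k * (φ.L : ℝ) ^ (2 * k)) (φ.ρ / 4) x := fun _ _ hδ hδr hr =>
  ⟨φ.le_volume hl hxM hx hδ hδr.le hr.le, φ.volume_le hl hMne hxM hx hδ hδr.le hr.le⟩

end StraighteningChart

lemma LocalScalingAt.mono {k l : ℕ} {M : Set (Fin k → ℝ)} {C C' ρ ρ' : ℝ} {x : Fin k → ℝ}
    (h : LocalScalingAt l M C ρ x) (hC : 0 < C) (hCC' : C ≤ C') (hρ : ρ' ≤ ρ) :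
    LocalScalingAt l M C' ρ' x := by
  intro δ r hδ hδr hr
  have hr0 : 0 < r := hδ.trans hδr
  obtain ⟨hlow, hup⟩ := h δ r hδ hδr (hr.trans_le hρ)
  refine ⟨le_trans (ENNReal.ofReal_le_ofReal ?_) hlow, hup.trans (ENNReal.ofReal_le_ofReal ?_)⟩ <;>
    gcongr

lemma IsCompact.exists_localScalingAt {k l : ℕ} {M : Set (Fin k → ℝ)} (hM : IsCompact M)
    (h : ∀ x₀ ∈ M, ∃ C ρ, 0 < C ∧ 0 < ρ ∧ ∀ᶠ x in 𝓝[M] x₀, LocalScalingAt l M C ρ x) :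
    ∃ C ρ, 0 < C ∧ 0 < ρ ∧ ∀ x ∈ M, LocalScalingAt l M C ρ x := by
  refine hM.induction_on
    (p := fun s => ∃ C ρ, 0 < C ∧ 0 < ρ ∧ ∀ x ∈ s, LocalScalingAt l M C ρ x)
    ⟨1, 1, one_pos, one_pos, by simp⟩ ?_ ?_ ?_
  · rintro s t hst ⟨C, ρ, hC, hρ, ht⟩
    exact ⟨C, ρ, hC, hρ, fun x hx => ht x (hst hx)⟩
  · rintro s t ⟨C, ρ, hC, hρ, hs⟩ ⟨C', ρ', hC', hρ', ht⟩
    refine ⟨max C C', min ρ ρ', lt_max_of_lt_left hC, lt_min hρ hρ', ?_⟩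
    rintro x (hx | hx)
    · exact (hs x hx).mono hC (le_max_left _ _) (min_le_left _ _)
    · exact (ht x hx).mono hC' (le_max_right _ _) (min_le_right _ _)
  · intro x₀ hx₀
    obtain ⟨C, ρ, hC, hρ, hx⟩ := h x₀ hx₀
    exact ⟨_, hx, C, ρ, hC, hρ, fun x hx => hx⟩

/-- A smooth compact `ℓ`-dimensional submanifold of `ℝ^k` satisfies the local scaling
property with respect to `κ = ℓ/k` and `g(r) = r^k`. -/
theorem stmt13 (k l : ℕ) (hl : l ≤ k) (M : Set (Fin k → ℝ))
    (hMcp : IsCompact M) (hMne : M.Nonempty)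
    (hsub : ∀ x ∈ M, ∃ (U : Set (Fin k → ℝ)) (f g : (Fin k → ℝ) → (Fin k → ℝ)),
      IsOpen U ∧ x ∈ U ∧ ContDiffOn ℝ (⊤ : ℕ∞) f U ∧ IsOpen (f '' U) ∧
        ContDiffOn ℝ (⊤ : ℕ∞) g (f '' U) ∧ (∀ y ∈ U, g (f y) = y) ∧
        f '' (M ∩ U) = (f '' U) ∩ {y : Fin k → ℝ | ∀ i : Fin k, l ≤ (i : ℕ) → y i = 0}) :
    ∃ c₃ c₄ r₀ : ℝ, 0 < c₃ ∧ 0 < c₄ ∧ 0 < r₀ ∧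
      ∀ δ r : ℝ, 0 < δ → δ < r → r < r₀ → ∀ x ∈ M,
        ENNReal.ofReal (c₃ * δ ^ (k - l) * r ^ l) ≤
            μH[(k : ℝ)] (Metric.closedBall x r ∩ {y | Metric.infDist y M < δ}) ∧
          μH[(k : ℝ)] (Metric.closedBall x r ∩ {y | Metric.infDist y M < δ}) ≤
            ENNReal.ofReal (c₄ * δ ^ (k - l) * r ^ l) := by
  obtain ⟨C, ρ, hC, hρ, hM⟩ := hMcp.exists_localScalingAt (l := l) fun x₀ hx₀ => by
    obtain ⟨U, f, g, hU, hx₀U, hf, hV, hg, hgf, hfM⟩ := hsub x₀ hx₀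
    obtain ⟨φ⟩ := exists_straighteningChart hU hx₀U (hf.of_le (by exact_mod_cast le_top)) hV
      (hg.of_le (by exact_mod_cast le_top)) hgf hfM
    refine ⟨2 ^ k * (φ.L : ℝ) ^ (2 * k), φ.ρ / 4, by have := φ.L_pos; positivity,
      by linarith [φ.ρ_pos], ?_⟩
    filter_upwards [self_mem_nhdsWithin,
      mem_nhdsWithin_of_mem_nhds (ball_mem_nhds x₀ (half_pos φ.ρ_pos))] with x hxM hx
    exact φ.localScalingAt hl hMne hxM hx
  have hμ : (μH[(k : ℝ)] : Measure (Fin k → ℝ)) = volume := by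
    simpa using hausdorffMeasure_pi_real (ι := Fin k)
  refine ⟨C⁻¹, C, ρ, inv_pos.2 hC, hC, hρ, fun δ r hδ hδr hr x hx => ?_⟩
  rw [hμ]
  exact hM x hx δ r hδ hδr hr
end
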